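/- arXiv:2403.16864 — 9 statements merged into one kernel-verified Lean document; each statement's English description precedes it below -/
import Mathlib

section
/- Let f1 ∈ F_{μ1,L1} and f2 ∈ F_{μ2,L2} with L1, L2 > 0, μ1 ≤ L1, μ2 ≤ L2, and let F := f1 − f2. For any DCA step from x to x⁺ one has (μ1 + μ2)/2 · ‖x − x⁺‖² ≤ F(x) − F(x⁺) ≤ (L1 + L2)/2 · ‖x − x⁺‖². In particular, if μ1 + μ2 ≥ 0 then F(x⁺) ≤ F(x), and if μ1 + μ2 > 0 and x⁺ ≠ x then F(x⁺) < F(x). -/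
open RealInnerProductSpace

variable {H : Type*} [NormedAddCommGroup H] [InnerProductSpace ℝ H]

/-- `f` has lower curvature `μ`, i.e. `f - (μ/2)‖·‖²` is convex. -/
def HasLowerCurvature (μ : ℝ) (f : H → ℝ) : Prop :=
  ConvexOn ℝ Set.univ fun x => f x - μ / 2 * ‖x‖ ^ 2

/-- `f` has upper curvature `L`, i.e. `(L/2)‖·‖² - f` is convex. -/
def HasUpperCurvature (L : ℝ) (f : H → ℝ) : Prop :=
  ConvexOn ℝ Set.univ fun x => L / 2 * ‖x‖ ^ 2 - f x

/-- `g` is a subgradient of `f` (of lower curvature `μ`) at `x`. -/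
def IsSubgradient (μ : ℝ) (f : H → ℝ) (x g : H) : Prop :=
  ∀ y, f y ≥ f x + ⟪g, y - x⟫ + μ / 2 * ‖y - x‖ ^ 2

open Filter Topology

/-!
By the subgradient inequality, the convex function `(L/2)‖·‖² - f` lies below a quadratic that
touches it at `x`; a convex function can only do so if the slope `L x - g` of that quadratic is one
of its subgradients, which says `f y ≤ f x + ⟪g, y - x⟫ + (L/2)‖y - x‖²`. Adding the lower and upper
bounds for `f₁` at `x⁺` and for `f₂` at `x`, both with the common slope `g`, sandwiches
`F(x) - F(x⁺)`.
-/

lemma le_of_forall_pos_sub_mul_le {a b C : ℝ} (h : ∀ s > 0, a - C * s ≤ b) : a ≤ b := by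
  have hlim : Tendsto (fun s => a - C * s) (𝓝[>] 0) (𝓝 a) := by
    refine Continuous.tendsto' ?_ 0 a (by simp) |>.mono_left nhdsWithin_le_nhds
    fun_prop
  exact le_of_tendsto hlim (eventually_nhdsWithin_of_forall h)

lemma ConvexOn.add_inner_le_of_le_quadratic {h : H → ℝ} (hh : ConvexOn ℝ Set.univ h)
    {x v : H} {C : ℝ} (hq : ∀ p, h p ≤ h x + ⟪v, p - x⟫ + C / 2 * ‖p - x‖ ^ 2) (y : H) :
    h x + ⟪v, y - x⟫ ≤ h y := by
  -- On the line `t ↦ x + t • (y - x)` the slope over `[0, 1]` dominates the slope over `[-s, 0]`,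
  -- which the quadratic bound makes at least `⟪v, y - x⟫ - O(s)`.
  have hline := hh.comp_affineMap (AffineMap.lineMap x y)
  refine le_of_forall_pos_sub_mul_le (C := C / 2 * ‖y - x‖ ^ 2) fun s hs => ?_
  have hslope := hline.slope_mono_adjacent (Set.mem_univ (-s)) (Set.mem_univ 1)
    (neg_lt_zero.2 hs) one_pos
  have hback := hq (AffineMap.lineMap x y (-s))
  simp only [Function.comp, AffineMap.lineMap_apply_module', zero_smul, one_smul, zero_add,
    sub_add_cancel, sub_zero, zero_sub, neg_neg, div_one] at hslope hback
  rw [add_sub_cancel_right, inner_smul_right, norm_smul, Real.norm_eq_abs, abs_neg,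
    abs_of_pos hs] at hback
  rw [div_le_iff₀ hs] at hslope
  nlinarith

lemma norm_sq_eq_add_inner_sub (x y : H) :
    ‖y‖ ^ 2 = ‖x‖ ^ 2 + 2 * ⟪x, y - x⟫ + ‖y - x‖ ^ 2 := by
  simpa using norm_add_sq_real x (y - x)

lemma IsSubgradient.le_add_inner_of_hasUpperCurvature {μ L : ℝ} {f : H → ℝ}
    (hup : HasUpperCurvature L f) {x g : H} (hg : IsSubgradient μ f x g) (y : H) :
    f y ≤ f x + ⟪g, y - x⟫ + L / 2 * ‖y - x‖ ^ 2 := by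
  have key := hup.add_inner_le_of_le_quadratic (x := x) (v := L • x - g) (C := L - μ)
    (fun p => by
      have := hg p
      rw [inner_sub_left, real_inner_smul_left, norm_sq_eq_add_inner_sub x p]
      linarith) y
  rw [inner_sub_left, real_inner_smul_left, norm_sq_eq_add_inner_sub x y] at key
  linarith

theorem dca_step_decrease_general
    (mu1 mu2 L1 L2 : ℝ)
    (f1 f2 : H → ℝ)
    (h1up : HasUpperCurvature L1 f1)
    (h2up : HasUpperCurvature L2 f2)
    (x xp g : H)
    (hg2 : IsSubgradient mu2 f2 x g) (hg1p : IsSubgradient mu1 f1 xp g) :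
    ((mu1 + mu2) / 2 * ‖x - xp‖ ^ 2 ≤ (f1 x - f2 x) - (f1 xp - f2 xp) ∧
      (f1 x - f2 x) - (f1 xp - f2 xp) ≤ (L1 + L2) / 2 * ‖x - xp‖ ^ 2) ∧
    (0 ≤ mu1 + mu2 → f1 xp - f2 xp ≤ f1 x - f2 x) ∧
    (0 < mu1 + mu2 → xp ≠ x → f1 xp - f2 xp < f1 x - f2 x) := by
  have hlo1 := hg1p x
  have hlo2 := hg2 xp
  have hup1 := hg1p.le_add_inner_of_hasUpperCurvature h1up x
  have hup2 := hg2.le_add_inner_of_hasUpperCurvature h2up xp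
  rw [norm_sub_rev] at hlo2 hup2
  rw [inner_sub_right] at hlo1 hlo2 hup1 hup2
  have hlower : (mu1 + mu2) / 2 * ‖x - xp‖ ^ 2 ≤ (f1 x - f2 x) - (f1 xp - f2 xp) := by linarith
  refine ⟨⟨hlower, by linarith⟩, fun hμ => ?_, fun hμ hne => ?_⟩
  · nlinarith [sq_nonneg ‖x - xp‖]
  · have hpos : 0 < ‖x - xp‖ ^ 2 := pow_pos (norm_pos_iff.2 (sub_ne_zero.2 hne.symm)) 2
    nlinarith

/-- sufficient condition for decrease of one DCA step. -/
theorem dca_step_decrease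
    (mu1 mu2 L1 L2 : ℝ) (hL1 : 0 < L1) (hL2 : 0 < L2)
    (hmu1 : mu1 ≤ L1) (hmu2 : mu2 ≤ L2)
    (f1 f2 : H → ℝ)
    (h1lo : HasLowerCurvature mu1 f1) (h1up : HasUpperCurvature L1 f1)
    (h2lo : HasLowerCurvature mu2 f2) (h2up : HasUpperCurvature L2 f2)
    (x xp g : H)
    (hg2 : IsSubgradient mu2 f2 x g) (hg1p : IsSubgradient mu1 f1 xp g) :
    ((mu1 + mu2) / 2 * ‖x - xp‖ ^ 2 ≤ (f1 x - f2 x) - (f1 xp - f2 xp) ∧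
      (f1 x - f2 x) - (f1 xp - f2 xp) ≤ (L1 + L2) / 2 * ‖x - xp‖ ^ 2) ∧
    (0 ≤ mu1 + mu2 → f1 xp - f2 xp ≤ f1 x - f2 x) ∧
    (0 < mu1 + mu2 → xp ≠ x → f1 xp - f2 xp < f1 x - f2 x) :=
  dca_step_decrease_general mu1 mu2 L1 L2 f1 f2 h1up h2up x xp g hg2 hg1p
end

section
/- (One-step decrease, regime p1.) Let f1 ∈ F_{μ1,L1} and f2 ∈ F_{μ2,L2} with L1 ≥ L2 > μ1 ≥ 0 and μ2 < L2, and assume either μ2 ≥ 0, or μ1 > −μ2 > 0 together with 1/μ1 + 1/μ2 + 1/L2 ≤ (1/L1)·(2 + L2/μ2). Let F := f1 − f2 and consider a DCA step from x to x⁺ with g2 ∈ ∂f2(x), g1⁺ ∈ ∂f1(x⁺), g1⁺ = g2, and let g1 ∈ ∂f1(x), g2⁺ ∈ ∂f2(x⁺). Then F(x) − F(x⁺) ≥ σ·(1/2)‖g1 − g2‖² + σ⁺·(1/2)‖g1⁺ − g2⁺‖², where σ = (L2 − μ1)/(L2(L1 − μ1)) and σ⁺ = (1/L2)·(1 + μ1(L1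 − L2)/(L2(L1 − μ1))). -/
/-!
Interpolating the curvature bounds gives, with `d = x - x⁺`,
`f1 x - f1 x⁺ ≥ ⟪g2, d⟫ + μ1/2 ‖d‖² + ‖g1 - g2 - μ1 d‖² / (2 (L1 - μ1))` and
`f2 x - f2 x⁺ ≤ ⟪g2, d⟫ - μ2/2 ‖d‖² - ‖g2 - g2⁺ - μ2 d‖² / (2 (L2 - μ2))`, where each interpolation
inequality comes from comparing the upper quadratic model of `f` at one point with the lower one at
the other. Subtracting and adding a multiple of the cocoercivity slack of `∂f2`, the gap to the
claimed bound is a nonnegative combination of `‖g1 - g2 - L2 d‖²` and `‖g2 - g2⁺ - L2 d‖²`; the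
weight of the second square is nonnegative precisely under the regime condition.
-/

open RealInnerProductSpace

variable {H : Type*} [NormedAddCommGroup H] [InnerProductSpace ℝ H]

open Set Filter Topology

theorem ConvexOn.add_le_of_forall_sub_le {E : Type*} [AddCommGroup E] [Module ℝ E]
    {h : E → ℝ} (hh : ConvexOn ℝ univ h) {y v : E} {c K : ℝ}
    (hbound : ∀ t > 0, h (y - t • v) ≤ h y - t * c + t ^ 2 * K) :
    h y + c ≤ h (y + v) := by
  have hslope : ∀ t > (0 : ℝ), h y + c ≤ h (y + v) + t * K := by
    intro t ht
    have hmid : (1 / (1 + t)) • (y - t • v) + (t / (1 + t)) • (y + v) = y := by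
      match_scalars
      · field_simp
      · field_simp; ring
    have hconv := hh.2 (mem_univ (y - t • v)) (mem_univ (y + v))
      (by positivity : (0 : ℝ) ≤ 1 / (1 + t)) (by positivity : (0 : ℝ) ≤ t / (1 + t))
      (by field_simp)
    rw [hmid, smul_eq_mul, smul_eq_mul] at hconv
    have hsplit : (1 + t) * h y ≤ h (y - t • v) + t * h (y + v) := by
      have := mul_le_mul_of_nonneg_left hconv (by positivity : (0 : ℝ) ≤ 1 + t)
      field_simp at this
      linarith
    have := hbound t ht
    refine le_of_mul_le_mul_left ?_ ht
    linear_combination hsplit + this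
  have hlim : Tendsto (fun t => h (y + v) + t * K) (𝓝[>] 0) (𝓝 (h (y + v))) := by
    refine tendsto_nhdsWithin_of_tendsto_nhds ?_
    simpa using tendsto_const_nhds.add ((tendsto_id (x := 𝓝 (0 : ℝ))).mul_const K)
  exact ge_of_tendsto hlim (eventually_nhdsWithin_of_forall hslope)

section Interpolation

variable {L μ : ℝ} {f : H → ℝ}

theorem HasUpperCurvature.apply_le_of_isSubgradient (hf : HasUpperCurvature L f) {y g : H}
    (hg : IsSubgradient μ f y g) (z : H) :
    f z ≤ f y + ⟪g, z - y⟫ + L / 2 * ‖z - y‖ ^ 2 := by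
  have hsupp := ConvexOn.add_le_of_forall_sub_le hf (y := y) (v := z - y)
    (c := ⟪L • y - g, z - y⟫) (K := (L - μ) / 2 * ‖z - y‖ ^ 2) fun t _ => by
      have := hg (y - t • (z - y))
      simp only [sub_sub_cancel_left, norm_neg, inner_neg_right, norm_sub_sq_real,
        inner_smul_right, inner_sub_left, inner_smul_left, norm_smul, mul_pow,
        Real.norm_eq_abs, sq_abs, RCLike.conj_to_real] at this ⊢
      linarith
  simp only [add_sub_cancel, inner_sub_left, inner_smul_left, RCLike.conj_to_real] at hsupp
  have hz : ‖z‖ ^ 2 = ‖y‖ ^ 2 + 2 * ⟪y, z - y⟫ + ‖z - y‖ ^ 2 := by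
    rw [← norm_add_sq_real, add_sub_cancel]
  rw [hz] at hsupp
  linarith

theorem HasUpperCurvature.interpolation_lower (hf : HasUpperCurvature L f) {a b ga gb : H}
    (ha : IsSubgradient μ f a ga) (hb : IsSubgradient μ f b gb) :
    f b + ⟪gb, a - b⟫ + μ / 2 * ‖a - b‖ ^ 2
      + 1 / (2 * (L - μ)) * ‖ga - gb - μ • (a - b)‖ ^ 2 ≤ f a := by
  set w := ga - gb - μ • (a - b) with hw
  have hk : (L - μ) * ((L - μ)⁻¹) ^ 2 = (L - μ)⁻¹ := by
    have := mul_inv_mul_cancel (L - μ)⁻¹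
    rw [inv_inv] at this
    linear_combination this
  have hwsq : ‖w‖ ^ 2 = ⟪ga, w⟫ - ⟪gb, w⟫ - μ * ⟪a - b, w⟫ := by
    rw [← real_inner_self_eq_norm_sq]
    nth_rewrite 1 [hw]
    rw [inner_sub_left, inner_sub_left, real_inner_smul_left]
  rw [one_div, mul_inv, ← div_eq_inv_mul]
  set k := (L - μ)⁻¹
  -- `a - k • w` is where the gap between the two quadratic models of `f` is smallest.
  have hup := hf.apply_le_of_isSubgradient ha (a - k • w)
  have hlow := hb (a - k • w)
  rw [show a - k • w - a = -(k • w) by abel, inner_neg_right, norm_neg, real_inner_smul_right,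
    norm_smul, mul_pow, Real.norm_eq_abs, sq_abs] at hup
  rw [show a - k • w - b = (a - b) - k • w by abel, inner_sub_right, real_inner_smul_right,
    norm_sub_sq_real (a - b), real_inner_smul_right, norm_smul, mul_pow, Real.norm_eq_abs,
    sq_abs] at hlow
  linear_combination hup + hlow + k * hwsq + ‖w‖ ^ 2 / 2 * hk

theorem HasUpperCurvature.interpolation_upper (hf : HasUpperCurvature L f) {a b ga gb : H}
    (ha : IsSubgradient μ f a ga) (hb : IsSubgradient μ f b gb) :
    f a ≤ f b + ⟪ga, a - b⟫ - μ / 2 * ‖a - b‖ ^ 2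
      - 1 / (2 * (L - μ)) * ‖ga - gb - μ • (a - b)‖ ^ 2 := by
  have h := hf.interpolation_lower hb ha
  rw [← neg_sub a b, inner_neg_right, norm_neg,
    show gb - ga - μ • -(a - b) = -(ga - gb - μ • (a - b)) by module, norm_neg] at h
  linarith

theorem HasUpperCurvature.cocoercive (hf : HasUpperCurvature L f) {a b ga gb : H}
    (ha : IsSubgradient μ f a ga) (hb : IsSubgradient μ f b gb) :
    μ * ‖a - b‖ ^ 2 + 1 / (L - μ) * ‖ga - gb - μ • (a - b)‖ ^ 2 ≤ ⟪ga - gb, a - b⟫ := by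
  have hlow := hf.interpolation_lower ha hb
  have hup := hf.interpolation_upper ha hb
  rw [show 1 / (2 * (L - μ)) = 1 / (L - μ) / 2 by rw [div_div, mul_comm]] at hlow hup
  rw [inner_sub_left]
  linear_combination hlow + hup

end Interpolation

theorem regime_p1_weight_nonneg {μ1 μ2 L1 L2 : ℝ}
    (h1 : L2 ≤ L1) (h2 : μ1 < L2) (h3 : 0 ≤ μ1)
    (hreg : 0 ≤ μ2 ∨
      (-μ2 < μ1 ∧ 0 < -μ2 ∧ 1 / μ1 + 1 / μ2 + 1 / L2 ≤ (1 / L1) * (2 + L2 / μ2))) :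
    0 ≤ μ1 * (L1 - L2) * (L2 + μ2) + μ2 * L2 * (L1 - μ1) := by
  have hL2 : 0 < L2 := h3.trans_lt h2
  rcases hreg with hμ2 | ⟨hμ12, hμ2, hineq⟩
  · have : 0 ≤ L1 - L2 := by linarith
    have : 0 ≤ L1 - μ1 := by linarith
    positivity
  · have hμ1 : 0 < μ1 := hμ2.trans hμ12
    have hL1 : 0 < L1 := by linarith
    have hscale : 0 < μ1 * -μ2 * L2 * L1 := by positivity
    have hμ2' : μ2 ≠ 0 := by linarith
    have key : μ1 * (L1 - L2) * (L2 + μ2) + μ2 * L2 * (L1 - μ1) =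
        μ1 * -μ2 * L2 * L1 * ((1 / L1) * (2 + L2 / μ2) - (1 / μ1 + 1 / μ2 + 1 / L2)) := by
      field_simp
      ring
    rw [key]
    exact mul_nonneg hscale.le (sub_nonneg.2 hineq)

theorem regime_p1_quadratic_bound {μ1 μ2 L1 L2 : ℝ}
    (h1 : L2 ≤ L1) (h2 : μ1 < L2) (h3 : 0 ≤ μ1) (h4 : μ2 < L2)
    (hN : 0 ≤ μ1 * (L1 - L2) * (L2 + μ2) + μ2 * L2 * (L1 - μ1)) {u v d : H}
    (hcoco : μ2 * ‖d‖ ^ 2 + 1 / (L2 - μ2) * ‖v - μ2 • d‖ ^ 2 ≤ ⟪v, d⟫) :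
    (L2 - μ1) / (L2 * (L1 - μ1)) * ((1 : ℝ) / 2) * ‖u‖ ^ 2 +
      (1 / L2) * (1 + μ1 * (L1 - L2) / (L2 * (L1 - μ1))) * ((1 : ℝ) / 2) * ‖v‖ ^ 2 ≤
    (μ1 + μ2) / 2 * ‖d‖ ^ 2 + 1 / (2 * (L1 - μ1)) * ‖u - μ1 • d‖ ^ 2
      + 1 / (2 * (L2 - μ2)) * ‖v - μ2 • d‖ ^ 2 := by
  have hL2 : 0 < L2 := h3.trans_lt h2
  have hD1 : 0 < L1 - μ1 := by linarith
  have hD2 : 0 < L2 - μ2 := by linarith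
  have ht : 0 ≤ μ1 * (L1 - L2) / (L2 * (L1 - μ1)) := by
    have : 0 ≤ L1 - L2 := by linarith
    positivity
  have hc1 : 0 ≤ μ1 / (2 * L2 * (L1 - μ1)) := by positivity
  have hc2 : 0 ≤ (μ1 * (L1 - L2) * (L2 + μ2) + μ2 * L2 * (L1 - μ1)) /
      (2 * L2 ^ 2 * (L1 - μ1) * (L2 - μ2)) := by positivity
  have hsq (w : H) (s : ℝ) : ‖w - s • d‖ ^ 2 = ‖w‖ ^ 2 - 2 * s * ⟪w, d⟫ + s ^ 2 * ‖d‖ ^ 2 := by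
    rw [norm_sub_sq_real, real_inner_smul_right, norm_smul, mul_pow, Real.norm_eq_abs, sq_abs]
    ring
  -- Multiplier `t = μ1 (L1 - L2) / (L2 (L1 - μ1))` on the cocoercivity slack; the remainder is a
  -- nonnegative combination of `‖u - L2 • d‖²` and `‖v - L2 • d‖²`.
  have hcert :
      (μ1 + μ2) / 2 * ‖d‖ ^ 2 + 1 / (2 * (L1 - μ1)) * ‖u - μ1 • d‖ ^ 2
        + 1 / (2 * (L2 - μ2)) * ‖v - μ2 • d‖ ^ 2
      - ((L2 - μ1) / (L2 * (L1 - μ1)) * ((1 : ℝ) / 2) * ‖u‖ ^ 2 +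
        (1 / L2) * (1 + μ1 * (L1 - L2) / (L2 * (L1 - μ1))) * ((1 : ℝ) / 2) * ‖v‖ ^ 2) =
      μ1 * (L1 - L2) / (L2 * (L1 - μ1)) *
          (⟪v, d⟫ - μ2 * ‖d‖ ^ 2 - 1 / (L2 - μ2) * ‖v - μ2 • d‖ ^ 2)
        + μ1 / (2 * L2 * (L1 - μ1)) * ‖u - L2 • d‖ ^ 2
        + (μ1 * (L1 - L2) * (L2 + μ2) + μ2 * L2 * (L1 - μ1)) /
          (2 * L2 ^ 2 * (L1 - μ1) * (L2 - μ2)) * ‖v - L2 • d‖ ^ 2 := by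
    simp only [hsq]
    field_simp
    ring
  have := mul_nonneg ht (sub_nonneg.2 hcoco)
  linarith [mul_nonneg hc1 (sq_nonneg ‖u - L2 • d‖), mul_nonneg hc2 (sq_nonneg ‖v - L2 • d‖)]

theorem dca_one_step_p1_general
    (mu1 mu2 L1 L2 : ℝ)
    (h1 : L2 ≤ L1) (h2 : mu1 < L2) (h3 : 0 ≤ mu1) (h4 : mu2 < L2)
    (hreg : 0 ≤ mu2 ∨
      (-mu2 < mu1 ∧ 0 < -mu2 ∧
        1 / mu1 + 1 / mu2 + 1 / L2 ≤ (1 / L1) * (2 + L2 / mu2)))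
    (f1 f2 : H → ℝ)
    (h1up : HasUpperCurvature L1 f1)
    (h2up : HasUpperCurvature L2 f2)
    (x xp g1 g2 g2p : H)
    (hg2 : IsSubgradient mu2 f2 x g2) (hg1p : IsSubgradient mu1 f1 xp g2)
    (hg1 : IsSubgradient mu1 f1 x g1) (hg2p : IsSubgradient mu2 f2 xp g2p) :
    (f1 x - f2 x) - (f1 xp - f2 xp) ≥
      (L2 - mu1) / (L2 * (L1 - mu1)) * ((1 : ℝ) / 2) * ‖g1 - g2‖ ^ 2 +
      (1 / L2) * (1 + mu1 * (L1 - L2) / (L2 * (L1 - mu1))) * ((1 : ℝ) / 2) * ‖g2 - g2p‖ ^ 2 := by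
  have hf1 := h1up.interpolation_lower hg1 hg1p
  have hf2 := h2up.interpolation_upper hg2 hg2p
  have hcoco := h2up.cocoercive hg2 hg2p
  have hbound := regime_p1_quadratic_bound h1 h2 h3 h4 (regime_p1_weight_nonneg h1 h2 h3 hreg)
    (u := g1 - g2) hcoco
  linarith

/-- one-step decrease, regime p1. -/
theorem dca_one_step_p1
    (mu1 mu2 L1 L2 : ℝ)
    (h1 : L2 ≤ L1) (h2 : mu1 < L2) (h3 : 0 ≤ mu1) (h4 : mu2 < L2)
    (hreg : 0 ≤ mu2 ∨
      (-mu2 < mu1 ∧ 0 < -mu2 ∧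
        1 / mu1 + 1 / mu2 + 1 / L2 ≤ (1 / L1) * (2 + L2 / mu2)))
    (f1 f2 : H → ℝ)
    (h1lo : HasLowerCurvature mu1 f1) (h1up : HasUpperCurvature L1 f1)
    (h2lo : HasLowerCurvature mu2 f2) (h2up : HasUpperCurvature L2 f2)
    (x xp g1 g2 g2p : H)
    (hg2 : IsSubgradient mu2 f2 x g2) (hg1p : IsSubgradient mu1 f1 xp g2)
    (hg1 : IsSubgradient mu1 f1 x g1) (hg2p : IsSubgradient mu2 f2 xp g2p) :
    (f1 x - f2 x) - (f1 xp - f2 xp) ≥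
      (L2 - mu1) / (L2 * (L1 - mu1)) * ((1 : ℝ) / 2) * ‖g1 - g2‖ ^ 2 +
      (1 / L2) * (1 + mu1 * (L1 - L2) / (L2 * (L1 - mu1))) * ((1 : ℝ) / 2) * ‖g2 - g2p‖ ^ 2 :=
  dca_one_step_p1_general mu1 mu2 L1 L2 h1 h2 h3 h4 hreg f1 f2 h1up h2up x xp g1 g2 g2p hg2 hg1p hg1
    hg2p
end

section
/- (One-step decrease, regime p2.) Let f1 ∈ F_{μ1,L1} and f2 ∈ F_{μ2,L2} with L2 ≥ L1 > μ2 ≥ 0 and μ1 < L1, and assume either μ1 ≥ 0, or μ2 > −μ1 > 0 together with 1/μ1 + 1/μ2 + 1/L1 ≤ (1/L2)·(2 + L1/μ1). Let F := f1 − f2 and consider a DCA step from x to x⁺ with g2 ∈ ∂f2(x), g1⁺ ∈ ∂f1(x⁺), g1⁺ = g2, and let g1 ∈ ∂f1(x), g2⁺ ∈ ∂f2(x⁺). Then F(x) − F(x⁺) ≥ σ·(1/2)‖g1 − g2‖² + σ⁺·(1/2)‖g1⁺ − g2⁺‖², where σ = (1/L1)·(1 + μ2(L2 − L1)/(L1(L2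 − μ2))) and σ⁺ = (L1 − μ2)/(L1(L2 − μ2)). -/
open RealInnerProductSpace

variable {H : Type*} [NormedAddCommGroup H] [InnerProductSpace ℝ H]

lemma smooth_ub_aux {L μ : ℝ} (hμL : μ ≤ L) {f : H → ℝ}
    (hup : HasUpperCurvature L f) {x g : H} (hg : IsSubgradient μ f x g) (z : H) :
    f z ≤ f x + ⟪g, z - x⟫ + L / 2 * ‖z - x‖ ^ 2 := by
  have stepA : ∀ u : H, L / 2 * ‖x + u‖ ^ 2 - f (x + u) ≤
      (L / 2 * ‖x‖ ^ 2 - f x) + ⟪L • x - g, u⟫ + (L - μ) / 2 * ‖u‖ ^ 2 := by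
    intro u
    have h1 := hg (x + u)
    simp only [add_sub_cancel_left] at h1
    have h2 : ‖x + u‖ ^ 2 = ‖x‖ ^ 2 + 2 * ⟪x, u⟫ + ‖u‖ ^ 2 := norm_add_sq_real x u
    have h3 : ⟪L • x - g, u⟫ = L * ⟪x, u⟫ - ⟪g, u⟫ := by
      rw [inner_sub_left, real_inner_smul_left]
    rw [h2, h3]; nlinarith [h1]
  have stepB : ∀ w : H, (L / 2 * ‖x‖ ^ 2 - f x) + ⟪L • x - g, w⟫ ≤
      L / 2 * ‖x + w‖ ^ 2 - f (x + w) := by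
    intro w
    refine le_of_forall_pos_le_add ?_
    intro ε hε
    have hC : 0 ≤ (L - μ) / 2 := by linarith
    have hden : 0 < (L - μ) / 2 * ‖w‖ ^ 2 + 1 := by positivity
    set t : ℝ := min 1 (ε / ((L - μ) / 2 * ‖w‖ ^ 2 + 1)) with htdef
    have ht0 : 0 < t := lt_min one_pos (div_pos hε hden)
    have ht1 : t ≤ 1 := min_le_left _ _
    have htε : (L - μ) / 2 * t * ‖w‖ ^ 2 ≤ ε := by
      have h' : t ≤ ε / ((L - μ) / 2 * ‖w‖ ^ 2 + 1) := min_le_right _ _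
      have h'' : t * ((L - μ) / 2 * ‖w‖ ^ 2 + 1) ≤ ε := by
        rw [← le_div_iff₀ hden]; exact h'
      nlinarith [mul_nonneg hC (sq_nonneg ‖w‖), ht0.le]
    have hcv := hup.2
    have c1 : L / 2 * ‖x + t • w‖ ^ 2 - f (x + t • w) ≤
        (1 - t) * (L / 2 * ‖x‖ ^ 2 - f x) + t * (L / 2 * ‖x + w‖ ^ 2 - f (x + w)) := by
      have h := hcv (Set.mem_univ x) (Set.mem_univ (x + w))
        (a := 1 - t) (b := t) (by linarith) ht0.le (by ring)
      have hpt : (1 - t) • x + t • (x + w) = x + t • w := by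
        rw [smul_add, sub_smul, one_smul]; abel
      simpa only [hpt, smul_eq_mul] using h
    have c2 : L / 2 * ‖x‖ ^ 2 - f x ≤
        (1 / 2 : ℝ) * (L / 2 * ‖x + t • w‖ ^ 2 - f (x + t • w)) +
        (1 / 2 : ℝ) * (L / 2 * ‖x - t • w‖ ^ 2 - f (x - t • w)) := by
      have h := hcv (Set.mem_univ (x + t • w)) (Set.mem_univ (x - t • w))
        (a := 1/2) (b := 1/2) (by norm_num) (by norm_num) (by norm_num)
      have hpt : (1 / 2 : ℝ) • (x + t • w) + (1 / 2 : ℝ) • (x - t • w) = x := by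
        rw [smul_add, smul_sub]; module
      simpa only [hpt, smul_eq_mul] using h
    have c3 : L / 2 * ‖x - t • w‖ ^ 2 - f (x - t • w) ≤
        (L / 2 * ‖x‖ ^ 2 - f x) + (-t) * ⟪L • x - g, w⟫ + (L - μ) / 2 * (t ^ 2 * ‖w‖ ^ 2) := by
      have h := stepA (-(t • w))
      have e1 : x + -(t • w) = x - t • w := by abel
      have e2 : ⟪L • x - g, -(t • w)⟫ = (-t) * ⟪L • x - g, w⟫ := by
        rw [inner_neg_right, real_inner_smul_right]; ring
      have e3 : ‖-(t • w)‖ ^ 2 = t ^ 2 * ‖w‖ ^ 2 := by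
        rw [norm_neg, norm_smul, Real.norm_eq_abs, mul_pow, sq_abs]
      rw [e1, e2, e3] at h
      exact h
    have key : 0 ≤ t * ((L / 2 * ‖x + w‖ ^ 2 - f (x + w)) + ε
        - (L / 2 * ‖x‖ ^ 2 - f x) - ⟪L • x - g, w⟫) := by
      nlinarith [c1, c2, c3, mul_le_mul_of_nonneg_left htε ht0.le]
    nlinarith [key, ht0]
  have h := stepB (z - x)
  have e1 : x + (z - x) = z := by abel
  have e2 : ⟪L • x - g, z - x⟫ = L * ⟪x, z - x⟫ - ⟪g, z - x⟫ := by
    rw [inner_sub_left, real_inner_smul_left]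
  have e3 : ‖z‖ ^ 2 = ‖x‖ ^ 2 + 2 * ⟪x, z - x⟫ + ‖z - x‖ ^ 2 := by
    nth_rewrite 1 [← e1]; exact norm_add_sq_real x (z - x)
  rw [e1, e2, e3] at h
  nlinarith [h]

lemma interp_aux {μ L : ℝ} (hμL : μ < L) {f : H → ℝ}
    (hup : HasUpperCurvature L f)
    {a b ga gb : H} (ha : IsSubgradient μ f a ga) (hb : IsSubgradient μ f b gb) :
    ‖ga - gb‖ ^ 2 + μ * L * ‖a - b‖ ^ 2 - 2 * μ * ⟪ga - gb, a - b⟫ ≤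
      2 * (L - μ) * (f a - f b - ⟪gb, a - b⟫) := by
  have hc : 0 < L - μ := sub_pos.2 hμL
  set D : H := a - b with hD
  set E : H := ga - gb with hE
  set z : H := a + (L - μ)⁻¹ • (μ • D - E) with hz
  have hza : z - a = (L - μ)⁻¹ • (μ • D - E) := by rw [hz]; abel
  have hzb : z - b = (L - μ)⁻¹ • (L • D - E) := by
    rw [hz]
    have : a - b = (L - μ)⁻¹ • ((L - μ) • D) := by
      rw [smul_smul, inv_mul_cancel₀ hc.ne', one_smul, hD]
    calc a + (L - μ)⁻¹ • (μ • D - E) - b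
        = (L - μ)⁻¹ • ((L - μ) • D) + (L - μ)⁻¹ • (μ • D - E) := by rw [← this]; abel
      _ = (L - μ)⁻¹ • (L • D - E) := by
          rw [← smul_add]; congr 1
          rw [sub_smul]; abel
  have hlo := hb z
  have hhi := smooth_ub_aux hμL.le hup ha z
  rw [hza] at hhi
  rw [hzb] at hlo
  have E1 : (L - μ) * ⟪gb, (L - μ)⁻¹ • (L • D - E)⟫ = L * ⟪gb, D⟫ - ⟪gb, E⟫ := by
    rw [real_inner_smul_right, inner_sub_right, real_inner_smul_right, ← mul_assoc,
      mul_inv_cancel₀ hc.ne', one_mul]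
  have E2 : (L - μ) * ⟪ga, (L - μ)⁻¹ • (μ • D - E)⟫ = μ * ⟪ga, D⟫ - ⟪ga, E⟫ := by
    rw [real_inner_smul_right, inner_sub_right, real_inner_smul_right, ← mul_assoc,
      mul_inv_cancel₀ hc.ne', one_mul]
  have E3 : (L - μ) ^ 2 * ‖(L - μ)⁻¹ • (L • D - E)‖ ^ 2 =
      L ^ 2 * ‖D‖ ^ 2 - 2 * L * ⟪E, D⟫ + ‖E‖ ^ 2 := by
    rw [norm_smul, Real.norm_eq_abs, mul_pow, sq_abs, ← mul_assoc,
      show (L - μ) ^ 2 * ((L - μ)⁻¹) ^ 2 = 1 by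
        rw [← mul_pow, mul_inv_cancel₀ hc.ne', one_pow], one_mul,
      norm_sub_sq_real, norm_smul, Real.norm_eq_abs, mul_pow, sq_abs,
      real_inner_smul_left, real_inner_comm D E]
    ring
  have E4 : (L - μ) ^ 2 * ‖(L - μ)⁻¹ • (μ • D - E)‖ ^ 2 =
      μ ^ 2 * ‖D‖ ^ 2 - 2 * μ * ⟪E, D⟫ + ‖E‖ ^ 2 := by
    rw [norm_smul, Real.norm_eq_abs, mul_pow, sq_abs, ← mul_assoc,
      show (L - μ) ^ 2 * ((L - μ)⁻¹) ^ 2 = 1 by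
        rw [← mul_pow, mul_inv_cancel₀ hc.ne', one_pow], one_mul,
      norm_sub_sq_real, norm_smul, Real.norm_eq_abs, mul_pow, sq_abs,
      real_inner_smul_left, real_inner_comm D E]
    ring
  have e5 : ⟪ga, D⟫ = ⟪gb, D⟫ + ⟪E, D⟫ := by
    rw [hE, inner_sub_left]; ring
  have e6 : ⟪ga, E⟫ = ⟪gb, E⟫ + ‖E‖ ^ 2 := by
    have h7 : ⟪E, E⟫ = ‖E‖ ^ 2 := real_inner_self_eq_norm_sq E
    rw [← h7, hE, inner_sub_left]; ring
  have chain : f b + ⟪gb, (L - μ)⁻¹ • (L • D - E)⟫ +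
      μ / 2 * ‖(L - μ)⁻¹ • (L • D - E)‖ ^ 2 ≤
      f a + ⟪ga, (L - μ)⁻¹ • (μ • D - E)⟫ +
      L / 2 * ‖(L - μ)⁻¹ • (μ • D - E)‖ ^ 2 := le_trans hlo hhi
  have big := mul_le_mul_of_nonneg_left chain (by positivity : (0:ℝ) ≤ 2 * (L - μ) ^ 2)
  have F1 : 2 * (L - μ) ^ 2 * (f b + ⟪gb, (L - μ)⁻¹ • (L • D - E)⟫ +
      μ / 2 * ‖(L - μ)⁻¹ • (L • D - E)‖ ^ 2) =
      2 * (L - μ) ^ 2 * f b + 2 * (L - μ) * (L * ⟪gb, D⟫ - ⟪gb, E⟫) +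
      μ * (L ^ 2 * ‖D‖ ^ 2 - 2 * L * ⟪E, D⟫ + ‖E‖ ^ 2) := by
    linear_combination (2 * (L - μ)) * E1 + μ * E3
  have F2 : 2 * (L - μ) ^ 2 * (f a + ⟪ga, (L - μ)⁻¹ • (μ • D - E)⟫ +
      L / 2 * ‖(L - μ)⁻¹ • (μ • D - E)‖ ^ 2) =
      2 * (L - μ) ^ 2 * f a + 2 * (L - μ) * (μ * ⟪ga, D⟫ - ⟪ga, E⟫) +
      L * (μ ^ 2 * ‖D‖ ^ 2 - 2 * μ * ⟪E, D⟫ + ‖E‖ ^ 2) := by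
    linear_combination (2 * (L - μ)) * E2 + L * E4
  rw [F1, F2] at big
  have goal' : (L - μ) * (‖E‖ ^ 2 + μ * L * ‖D‖ ^ 2 - 2 * μ * ⟪E, D⟫) ≤
      (L - μ) * (2 * (L - μ) * (f a - f b - ⟪gb, D⟫)) := by
    nlinarith [big, e5, e6]
  have := le_of_mul_le_mul_left goal' hc
  linarith [this]

set_option maxHeartbeats 1000000 in
/-- one-step decrease, regime p2. -/
theorem dca_one_step_p2
    (mu1 mu2 L1 L2 : ℝ)
    (h1 : L1 ≤ L2) (h2 : mu2 < L1) (h3 : 0 ≤ mu2) (h4 : mu1 < L1)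
    (hreg : 0 ≤ mu1 ∨
      (-mu1 < mu2 ∧ 0 < -mu1 ∧
        1 / mu1 + 1 / mu2 + 1 / L1 ≤ (1 / L2) * (2 + L1 / mu1)))
    (f1 f2 : H → ℝ)
    (h1lo : HasLowerCurvature mu1 f1) (h1up : HasUpperCurvature L1 f1)
    (h2lo : HasLowerCurvature mu2 f2) (h2up : HasUpperCurvature L2 f2)
    (x xp g1 g2 g2p : H)
    (hg2 : IsSubgradient mu2 f2 x g2) (hg1p : IsSubgradient mu1 f1 xp g2)
    (hg1 : IsSubgradient mu1 f1 x g1) (hg2p : IsSubgradient mu2 f2 xp g2p) :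
    (f1 x - f2 x) - (f1 xp - f2 xp) ≥
      (1 / L1) * (1 + mu2 * (L2 - L1) / (L1 * (L2 - mu2))) * ((1 : ℝ) / 2) * ‖g1 - g2‖ ^ 2 +
      (L1 - mu2) / (L1 * (L2 - mu2)) * ((1 : ℝ) / 2) * ‖g2 - g2p‖ ^ 2 := by
  have hL1 : 0 < L1 := lt_of_le_of_lt h3 h2
  have hA : 0 < L2 - mu2 := by linarith
  have hB : 0 < L1 - mu1 := by linarith
  have hL2 : 0 < L2 := by linarith
  have hm2L2 : mu2 < L2 := by linarith
  -- interpolation inequalities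
  have hI1 := interp_aux h4 h1up hg1 hg1p
  have hI2 := interp_aux h4 h1up hg1p hg1
  have hI3 := interp_aux hm2L2 h2up hg2p hg2
  -- normalization rewrites
  have r1 : ‖g2 - g1‖ = ‖g1 - g2‖ := norm_sub_rev _ _
  have r2 : ‖xp - x‖ = ‖x - xp‖ := norm_sub_rev _ _
  have r3 : ⟪g2 - g1, xp - x⟫ = ⟪g1 - g2, x - xp⟫ := by
    rw [← neg_sub g1 g2, ← neg_sub x xp, inner_neg_neg]
  have r4 : ⟪g1, xp - x⟫ = -(⟪g2, x - xp⟫ + ⟪g1 - g2, x - xp⟫) := by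
    rw [show (xp - x) = -(x - xp) from by abel, inner_neg_right, inner_sub_left]; ring
  have r5 : ⟪g2, xp - x⟫ = -⟪g2, x - xp⟫ := by
    rw [show (xp - x) = -(x - xp) from by abel, inner_neg_right]
  have r6 : ⟪g2p - g2, xp - x⟫ = ⟪g2 - g2p, x - xp⟫ := by
    rw [← neg_sub g2 g2p, ← neg_sub x xp, inner_neg_neg]
  have r7 : ‖g2p - g2‖ = ‖g2 - g2p‖ := norm_sub_rev _ _
  rw [r1, r2, r3, r4] at hI2
  rw [r2, r5, r6, r7] at hI3
  -- residual squares
  have hR1 : 0 ≤ ‖g1 - g2‖ ^ 2 - 2 * L1 * ⟪g1 - g2, x - xp⟫ + L1 ^ 2 * ‖x - xp‖ ^ 2 := by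
    have e : ‖g1 - g2 - L1 • (x - xp)‖ ^ 2 =
        ‖g1 - g2‖ ^ 2 - 2 * L1 * ⟪g1 - g2, x - xp⟫ + L1 ^ 2 * ‖x - xp‖ ^ 2 := by
      rw [norm_sub_sq_real, real_inner_smul_right, norm_smul, Real.norm_eq_abs,
        mul_pow, sq_abs]
      ring
    rw [← e]; positivity
  have hR2 : 0 ≤ ‖g2 - g2p‖ ^ 2 - 2 * L1 * ⟪g2 - g2p, x - xp⟫ + L1 ^ 2 * ‖x - xp‖ ^ 2 := by
    have e : ‖g2 - g2p - L1 • (x - xp)‖ ^ 2 =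
        ‖g2 - g2p‖ ^ 2 - 2 * L1 * ⟪g2 - g2p, x - xp⟫ + L1 ^ 2 * ‖x - xp‖ ^ 2 := by
      rw [norm_sub_sq_real, real_inner_smul_right, norm_smul, Real.norm_eq_abs,
        mul_pow, sq_abs]
      ring
    rw [← e]; positivity
  -- the key scalar certificate
  have hN : 0 ≤ mu2 * L1 * (L2 - L1) + mu1 * (L1 * (L2 - mu2) + mu2 * (L2 - L1)) := by
    rcases hreg with hm1 | ⟨hb1, hb2, hb3⟩
    · have k1 : 0 ≤ mu2 * (L2 - L1) := mul_nonneg h3 (by linarith)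
      have k2 : 0 ≤ L1 * (L2 - mu2) := by positivity
      nlinarith [mul_nonneg hm1 (add_nonneg k2 k1), mul_nonneg (mul_nonneg h3 hL1.le) (by linarith : (0:ℝ) ≤ L2 - L1)]
    · have hm1 : mu1 < 0 := by linarith
      have hm2 : 0 < mu2 := by linarith
      have hKpos : 0 < (-mu1) * (mu2 * L1 * L2) := mul_pos hb2 (by positivity)
      have h5 := mul_le_mul_of_nonneg_right hb3 hKpos.le
      have e1 : (1 / mu1 + 1 / mu2 + 1 / L1) * ((-mu1) * (mu2 * L1 * L2)) =
          -(mu2 * L1 * L2) - mu1 * L1 * L2 - mu1 * mu2 * L2 := by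
        field_simp [hm1.ne, hm2.ne', hL1.ne', hL2.ne']
        ring
      have e2 : ((1 / L2) * (2 + L1 / mu1)) * ((-mu1) * (mu2 * L1 * L2)) =
          -(2 * mu1 * mu2 * L1) - mu2 * L1 ^ 2 := by
        field_simp [hm1.ne, hm2.ne', hL1.ne', hL2.ne']
        ring
      rw [e1, e2] at h5
      nlinarith [h5]
  -- final combination
  have c1 : 0 ≤ L1 * (L1 * (L2 - mu2) + mu2 * (L2 - L1)) := by
    have : 0 ≤ mu2 * (L2 - L1) := mul_nonneg h3 (by linarith)
    nlinarith [hL1, hA]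
  have c2 : 0 ≤ L1 * mu2 * (L2 - L1) := by
    have : 0 ≤ mu2 * (L2 - L1) := mul_nonneg h3 (by linarith)
    nlinarith [hL1]
  have c3 : 0 ≤ L1 ^ 2 * (L1 - mu1) := by positivity
  have c5 : 0 ≤ mu2 * L1 * (L1 - mu1) := by positivity
  have hK : 0 < 2 * L1 ^ 2 * (L2 - mu2) * (L1 - mu1) := by positivity
  have hS1 : 0 ≤ 2 * (L1 - mu1) * (f1 x - f1 xp - ⟪g2, x - xp⟫) -
      (‖g1 - g2‖ ^ 2 + mu1 * L1 * ‖x - xp‖ ^ 2 - 2 * mu1 * ⟪g1 - g2, x - xp⟫) := by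
    linarith [hI1]
  have hS2 : 0 ≤ 2 * (L1 - mu1) * (f1 xp - f1 x + ⟪g2, x - xp⟫ + ⟪g1 - g2, x - xp⟫) -
      (‖g1 - g2‖ ^ 2 + mu1 * L1 * ‖x - xp‖ ^ 2 - 2 * mu1 * ⟪g1 - g2, x - xp⟫) := by
    nlinarith [hI2]
  have hS3 : 0 ≤ 2 * (L2 - mu2) * (f2 xp - f2 x + ⟪g2, x - xp⟫) -
      (‖g2 - g2p‖ ^ 2 + mu2 * L2 * ‖x - xp‖ ^ 2 - 2 * mu2 * ⟪g2 - g2p, x - xp⟫) := by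
    nlinarith [hI3]
  have main : 2 * L1 ^ 2 * (L2 - mu2) * (L1 - mu1) *
      (((f1 x - f2 x) - (f1 xp - f2 xp)) -
        ((1 / L1) * (1 + mu2 * (L2 - L1) / (L1 * (L2 - mu2))) * ((1 : ℝ) / 2) * ‖g1 - g2‖ ^ 2 +
         (L1 - mu2) / (L1 * (L2 - mu2)) * ((1 : ℝ) / 2) * ‖g2 - g2p‖ ^ 2)) =
      L1 * (L1 * (L2 - mu2) + mu2 * (L2 - L1)) *
        (2 * (L1 - mu1) * (f1 x - f1 xp - ⟪g2, x - xp⟫) -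
          (‖g1 - g2‖ ^ 2 + mu1 * L1 * ‖x - xp‖ ^ 2 - 2 * mu1 * ⟪g1 - g2, x - xp⟫)) +
      L1 * mu2 * (L2 - L1) *
        (2 * (L1 - mu1) * (f1 xp - f1 x + ⟪g2, x - xp⟫ + ⟪g1 - g2, x - xp⟫) -
          (‖g1 - g2‖ ^ 2 + mu1 * L1 * ‖x - xp‖ ^ 2 - 2 * mu1 * ⟪g1 - g2, x - xp⟫)) +
      L1 ^ 2 * (L1 - mu1) *
        (2 * (L2 - mu2) * (f2 xp - f2 x + ⟪g2, x - xp⟫) -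
          (‖g2 - g2p‖ ^ 2 + mu2 * L2 * ‖x - xp‖ ^ 2 - 2 * mu2 * ⟪g2 - g2p, x - xp⟫)) +
      (mu2 * L1 * (L2 - L1) + mu1 * (L1 * (L2 - mu2) + mu2 * (L2 - L1))) *
        (‖g1 - g2‖ ^ 2 - 2 * L1 * ⟪g1 - g2, x - xp⟫ + L1 ^ 2 * ‖x - xp‖ ^ 2) +
      mu2 * L1 * (L1 - mu1) *
        (‖g2 - g2p‖ ^ 2 - 2 * L1 * ⟪g2 - g2p, x - xp⟫ + L1 ^ 2 * ‖x - xp‖ ^ 2) := by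
    field_simp
    ring
  have big : 0 ≤ 2 * L1 ^ 2 * (L2 - mu2) * (L1 - mu1) *
      (((f1 x - f2 x) - (f1 xp - f2 xp)) -
        ((1 / L1) * (1 + mu2 * (L2 - L1) / (L1 * (L2 - mu2))) * ((1 : ℝ) / 2) * ‖g1 - g2‖ ^ 2 +
         (L1 - mu2) / (L1 * (L2 - mu2)) * ((1 : ℝ) / 2) * ‖g2 - g2p‖ ^ 2)) := by
    rw [main]
    have t1 := mul_nonneg c1 hS1
    have t2 := mul_nonneg c2 hS2
    have t3 := mul_nonneg c3 hS3
    have t4 := mul_nonneg hN hR1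
    have t5 := mul_nonneg c5 hR2
    linarith
  have h9 : 2 * L1 ^ 2 * (L2 - mu2) * (L1 - mu1) * 0 ≤
      2 * L1 ^ 2 * (L2 - mu2) * (L1 - mu1) *
      (((f1 x - f2 x) - (f1 xp - f2 xp)) -
        ((1 / L1) * (1 + mu2 * (L2 - L1) / (L1 * (L2 - mu2))) * ((1 : ℝ) / 2) * ‖g1 - g2‖ ^ 2 +
         (L1 - mu2) / (L1 * (L2 - mu2)) * ((1 : ℝ) / 2) * ‖g2 - g2p‖ ^ 2)) := by
    linarith [big]
  have h10 := le_of_mul_le_mul_left h9 hK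
  linarith [h10]
end

section
/- (One-step decrease, regime p3.) Let f1 ∈ F_{μ1,L1} and f2 ∈ F_{μ2,L2} with μ1 > −μ2 > 0, L2 > μ1, L1 > μ2, and (1/L1)·(2 + L2/μ2) ≤ 1/μ1 + 1/μ2 + 1/L2 ≤ 0. Let F := f1 − f2 and consider a DCA step from x to x⁺ with g2 ∈ ∂f2(x), g1⁺ ∈ ∂f1(x⁺), g1⁺ = g2, and let g1 ∈ ∂f1(x), g2⁺ ∈ ∂f2(x⁺). Then F(x) − F(x⁺) ≥ σ·(1/2)‖g1 − g2‖² + σ⁺·(1/2)‖g1⁺ − g2⁺‖², where σ = (1/L1)·(1/μ1 + 1/μ2 + 1/L2) / (1/μ1 + 1/μ2 + 1/L2 − 1/L1) and σ⁺ = 1/(L2 + μ2). -/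
open RealInnerProductSpace

variable {H : Type*} [NormedAddCommGroup H] [InnerProductSpace ℝ H]

/-! Interpolation: if `f` has upper curvature `L` and `μ`-subgradients `g_x`, `g_y` at `x`, `y`, then
`‖g_y - g_x - μ (y - x)‖² ≤ 2 (L - μ) (f y - f x - ⟪g_x, y - x⟫ - μ/2 ‖y - x‖²)`.
Applied once to `f1` (from `x⁺` to `x`), and in both directions to `f2` with the nonnegative
weights `L2`, `-μ2`, it bounds `F x - F x⁺` below by `σ⁺/2 ‖g2 - g2⁺‖²` plus a quadratic form in
`g1 - g2` and `x - x⁺`. Minimising that form over `x - x⁺` leaves `σ/2 ‖g1 - g2‖²`, because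
`1/σ = L1 - μ1 + μ1²/κ` with `κ = μ1 + L2 μ2/(L2 + μ2)`, and `κ ≥ 0` is exactly
`1/μ1 + 1/μ2 + 1/L2 ≤ 0`. -/

open Filter Topology

theorem le_of_forall_pos_le_add_mul {a b c : ℝ} (h : ∀ t > 0, a ≤ b + t * c) : a ≤ b := by
  have hlim : Tendsto (fun t => b + t * c) (𝓝[>] 0) (𝓝 b) :=
    ((continuous_const.add (continuous_id.mul continuous_const)).tendsto' 0 b
      (by simp)).mono_left nhdsWithin_le_nhds
  exact ge_of_tendsto hlim (eventually_nhdsWithin_of_forall h)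

theorem le_two_mul_mul_of_forall_mul_sub_sq_le {a b c : ℝ} (hc : 0 ≤ c)
    (h : ∀ t : ℝ, t * b - c / 2 * t ^ 2 * b ≤ a) : b ≤ 2 * c * a := by
  rcases hc.eq_or_lt with rfl | hc
  · by_contra! hb
    have := h ((|a| + 1) / b)
    rw [mul_zero, zero_mul] at hb
    rw [div_mul_cancel₀ _ hb.ne'] at this
    linarith [le_abs_self a]
  · have := h c⁻¹
    field_simp at this
    nlinarith

section Curvature

variable {μ L : ℝ} {f : H → ℝ}

theorem IsSubgradient.apply_le (hf : HasUpperCurvature L f) {x g : H}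
    (hg : IsSubgradient μ f x g) (y : H) :
    f y ≤ f x + ⟪g, y - x⟫ + L / 2 * ‖y - x‖ ^ 2 := by
  obtain ⟨d, rfl⟩ : ∃ d, y = x + d := ⟨y - x, by abel⟩
  rw [add_sub_cancel_left]
  -- convexity of `L/2 ‖·‖² - f` on the segment `[x - t • d, x + d]` through `x`, then `t → 0`
  refine le_of_forall_pos_le_add_mul (c := (L - μ) / 2 * ‖d‖ ^ 2) fun t ht => ?_
  have hx : (t / (1 + t)) • (x + d) + (1 / (1 + t)) • (x - t • d) = x := by
    match_scalars <;> field_simp <;> ring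
  have hconv := hf.2 (Set.mem_univ (x + d)) (Set.mem_univ (x - t • d))
    (by positivity : 0 ≤ t / (1 + t)) (by positivity : 0 ≤ 1 / (1 + t)) (by field_simp; ring)
  rw [hx] at hconv
  simp only [smul_eq_mul] at hconv
  have hz := hg (x - t • d)
  rw [sub_sub_cancel_left, inner_neg_right, norm_neg, inner_smul_right, norm_smul,
    Real.norm_eq_abs, abs_of_pos ht] at hz
  rw [norm_add_sq_real, norm_sub_sq_real, inner_smul_right, norm_smul, Real.norm_eq_abs, abs_of_pos ht] at hconv
  have h1t : 0 < 1 + t := by linarith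
  field_simp at hconv
  refine le_of_mul_le_mul_left ?_ ht
  linear_combination (hconv + 2 * hz) / 2

theorem IsSubgradient.le_of_hasUpperCurvature [Nontrivial H] (hf : HasUpperCurvature L f)
    {x g : H} (hg : IsSubgradient μ f x g) : μ ≤ L := by
  obtain ⟨v, hv⟩ := exists_ne (0 : H)
  have hlow := hg (x + v)
  have hup := hg.apply_le hf (x + v)
  rw [add_sub_cancel_left] at hlow hup
  have : 0 < ‖v‖ ^ 2 := by positivity
  nlinarith

theorem IsSubgradient.norm_sub_sub_smul_sq_le (hf : HasUpperCurvature L f) (hμL : μ ≤ L)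
    {x gx y gy : H} (hx : IsSubgradient μ f x gx) (hy : IsSubgradient μ f y gy) :
    ‖gy - gx - μ • (y - x)‖ ^ 2 ≤
      2 * (L - μ) * (f y - f x - ⟪gx, y - x⟫ - μ / 2 * ‖y - x‖ ^ 2) := by
  set u := gy - gx - μ • (y - x) with hu
  refine le_two_mul_mul_of_forall_mul_sub_sq_le (sub_nonneg.2 hμL) fun t => ?_
  -- the lower bound from `x` and the upper bound from `y`, both at `y - t • u`
  have hlow := hx (y - t • u)
  have hup := hy.apply_le hf (y - t • u)
  have huu : ‖u‖ ^ 2 = ⟪gy, u⟫ - ⟪gx, u⟫ - μ * ⟪y - x, u⟫ := by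
    rw [← real_inner_self_eq_norm_sq]
    nth_rw 1 [hu]
    rw [inner_sub_left, inner_sub_left, real_inner_smul_left]
  rw [sub_right_comm, norm_sub_sq_real, inner_sub_right, inner_smul_right, inner_smul_right,
    norm_smul, Real.norm_eq_abs, mul_pow, sq_abs] at hlow
  rw [sub_sub_cancel_left, inner_neg_right, norm_neg, inner_smul_right, norm_smul,
    Real.norm_eq_abs, mul_pow, sq_abs] at hup
  linear_combination hup + hlow + t * huu

theorem IsSubgradient.norm_sub_sq_add_mul_le (hf : HasUpperCurvature L f) (hμ : μ ≤ 0)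
    (hLμ : 0 < L + μ) {x gx y gy : H} (hx : IsSubgradient μ f x gx)
    (hy : IsSubgradient μ f y gy) :
    ‖gy - gx‖ ^ 2 + L * μ * ‖y - x‖ ^ 2 ≤ 2 * (L + μ) * (f y - f x - ⟪gx, y - x⟫) := by
  have hμL : μ < L := by linarith
  have hxy := hx.norm_sub_sub_smul_sq_le hf hμL.le hy
  have hyx := hy.norm_sub_sub_smul_sq_le hf hμL.le hx
  rw [show gx - gy - μ • (x - y) = -(gy - gx - μ • (y - x)) by module, norm_neg,
    norm_sub_rev x y, ← neg_sub y x, inner_neg_right] at hyx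
  have hexp : ‖gy - gx - μ • (y - x)‖ ^ 2 =
      ‖gy - gx‖ ^ 2 - 2 * μ * (⟪gy, y - x⟫ - ⟪gx, y - x⟫) + μ ^ 2 * ‖y - x‖ ^ 2 := by
    rw [norm_sub_sq_real, inner_smul_right, inner_sub_left, norm_smul, Real.norm_eq_abs,
      mul_pow, sq_abs]
    ring
  -- weights `L` and `-μ`, both nonnegative, eliminate `f x - f y` up to the factor `L - μ`
  refine le_of_mul_le_mul_left ?_ (sub_pos.2 hμL)
  have hL := mul_le_mul_of_nonneg_left hxy (by linarith : 0 ≤ L)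
  have hμ' := mul_le_mul_of_nonneg_left hyx (neg_nonneg.2 hμ)
  linear_combination hL + hμ' + (μ - L) * hexp

theorem div_mul_norm_sq_le_of_norm_sub_smul_sq_le {a e : H} {m c κ P : ℝ} (hm : m ≠ 0)
    (hc : 0 ≤ c) (hκ : 0 ≤ κ) (hP : 0 ≤ P) (h : ‖a - m • e‖ ^ 2 ≤ 2 * c * P) :
    κ / (c * κ + m ^ 2) * ‖a‖ ^ 2 ≤ 2 * P + κ * ‖e‖ ^ 2 := by
  have hden : 0 < c * κ + m ^ 2 := by positivity
  rw [div_mul_eq_mul_div, div_le_iff₀ hden]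
  obtain ⟨x, rfl⟩ : ∃ x, a = x + m • e := ⟨a - m • e, by abel⟩
  rw [add_sub_cancel_right] at h
  have hnorm : ‖x + m • e‖ ^ 2 = ‖x‖ ^ 2 + 2 * m * ⟪x, e⟫ + m ^ 2 * ‖e‖ ^ 2 := by
    rw [norm_add_sq_real, inner_smul_right, norm_smul, Real.norm_eq_abs, mul_pow, sq_abs]
    ring
  rw [hnorm]
  rcases hc.eq_or_lt with rfl | hc
  · have hx : x = 0 := by
      rw [mul_zero, zero_mul] at h
      exact norm_eq_zero.1 (pow_eq_zero_iff two_ne_zero |>.1 (le_antisymm h (by positivity)))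
    subst hx
    simp only [norm_zero, inner_zero_left]
    nlinarith [mul_nonneg hP (sq_nonneg m)]
  · -- `c` times the gap is `(c κ + m²)(2 c P - ‖x‖²) + ‖m x - c κ e‖²`
    have hsq : 0 ≤ ‖m • x - (c * κ) • e‖ ^ 2 := by positivity
    rw [norm_sub_sq_real, real_inner_smul_left, inner_smul_right, norm_smul, norm_smul,
      Real.norm_eq_abs, Real.norm_eq_abs, mul_pow, mul_pow, sq_abs, sq_abs] at hsq
    refine le_of_mul_le_mul_left ?_ hc
    have hh := mul_le_mul_of_nonneg_left h hden.le
    linear_combination hh + hsq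

end Curvature

section Rate

variable {mu1 mu2 L1 L2 : ℝ}

theorem add_mul_div_add_eq_mul_inv_sum (hmu1 : mu1 ≠ 0) (hmu2 : mu2 ≠ 0) (hL2 : L2 ≠ 0)
    (hL2mu2 : L2 + mu2 ≠ 0) :
    mu1 + L2 * mu2 / (L2 + mu2) =
      mu1 * mu2 * L2 / (L2 + mu2) * (1 / mu1 + 1 / mu2 + 1 / L2) := by
  field_simp
  ring

theorem add_mul_div_add_nonneg (hmu1 : 0 < mu1) (hmu2 : mu2 < 0) (hL2mu2 : 0 < L2 + mu2)
    (hs : 1 / mu1 + 1 / mu2 + 1 / L2 ≤ 0) : 0 ≤ mu1 + L2 * mu2 / (L2 + mu2) := by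
  have hL2 : 0 < L2 := by linarith
  rw [add_mul_div_add_eq_mul_inv_sum hmu1.ne' hmu2.ne hL2.ne' hL2mu2.ne']
  exact mul_nonneg_of_nonpos_of_nonpos
    (div_nonpos_of_nonpos_of_nonneg (by nlinarith [mul_pos hmu1 hL2]) hL2mu2.le) hs

theorem one_div_mul_div_sub_one_div_eq (hmu1 : 0 < mu1) (hmu2 : mu2 < 0) (hL2mu2 : 0 < L2 + mu2)
    (hmuL1 : mu1 ≤ L1) (hs : 1 / mu1 + 1 / mu2 + 1 / L2 ≤ 0) :
    1 / L1 * (1 / mu1 + 1 / mu2 + 1 / L2) / (1 / mu1 + 1 / mu2 + 1 / L2 - 1 / L1) =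
      (mu1 + L2 * mu2 / (L2 + mu2)) /
        ((L1 - mu1) * (mu1 + L2 * mu2 / (L2 + mu2)) + mu1 ^ 2) := by
  have hL1 : 0 < L1 := hmu1.trans_le hmuL1
  have hL2 : 0 < L2 := by linarith
  have hden : 1 / mu1 + 1 / mu2 + 1 / L2 - 1 / L1 < 0 := by
    have : 0 < 1 / L1 := by positivity
    linarith
  have hden' : 0 < (L1 - mu1) * (mu1 + L2 * mu2 / (L2 + mu2)) + mu1 ^ 2 := by
    have := mul_nonneg (sub_nonneg.2 hmuL1) (add_mul_div_add_nonneg hmu1 hmu2 hL2mu2 hs)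
    positivity
  rw [div_eq_div_iff hden.ne hden'.ne']
  field_simp [hmu2.ne]
  ring

end Rate

theorem dca_one_step_p3_general
    (mu1 mu2 L1 L2 : ℝ)
    (h1 : -mu2 < mu1) (h2 : 0 < -mu2) (h3 : mu1 < L2)
    (h6 : 1 / mu1 + 1 / mu2 + 1 / L2 ≤ 0)
    (f1 f2 : H → ℝ)
    (h1up : HasUpperCurvature L1 f1)
    (h2up : HasUpperCurvature L2 f2)
    (x xp g1 g2 g2p : H)
    (hg2 : IsSubgradient mu2 f2 x g2) (hg1p : IsSubgradient mu1 f1 xp g2)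
    (hg1 : IsSubgradient mu1 f1 x g1) (hg2p : IsSubgradient mu2 f2 xp g2p) :
    (f1 x - f2 x) - (f1 xp - f2 xp) ≥
      (1 / L1) * (1 / mu1 + 1 / mu2 + 1 / L2) / (1 / mu1 + 1 / mu2 + 1 / L2 - 1 / L1) *
        ((1 : ℝ) / 2) * ‖g1 - g2‖ ^ 2 +
      1 / (L2 + mu2) * ((1 : ℝ) / 2) * ‖g2 - g2p‖ ^ 2 := by
  rcases subsingleton_or_nontrivial H with hH | hH
  · simp [Subsingleton.elim xp x, Subsingleton.elim g1 g2, Subsingleton.elim g2p g2]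
  have hmu1 : 0 < mu1 := by linarith
  have hmu2 : mu2 < 0 := by linarith
  have hL2mu2 : 0 < L2 + mu2 := by linarith
  have hmuL1 := hg1.le_of_hasUpperCurvature h1up
  have hP : 0 ≤ f1 x - f1 xp - ⟪g2, x - xp⟫ - mu1 / 2 * ‖x - xp‖ ^ 2 := by
    linarith [hg1p x]
  have hA := div_mul_norm_sq_le_of_norm_sub_smul_sq_le hmu1.ne' (sub_nonneg.2 hmuL1)
    (add_mul_div_add_nonneg hmu1 hmu2 hL2mu2 h6) hP
    (hg1p.norm_sub_sub_smul_sq_le h1up hmuL1 hg1)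
  have hB := hg2.norm_sub_sq_add_mul_le h2up hmu2.le hL2mu2 hg2p
  rw [norm_sub_rev g2p, norm_sub_rev xp, ← neg_sub x xp, inner_neg_right] at hB
  have hB' : (‖g2 - g2p‖ ^ 2 + L2 * mu2 * ‖x - xp‖ ^ 2) / (L2 + mu2) ≤
      2 * (f2 xp - f2 x + ⟪g2, x - xp⟫) := by
    rw [div_le_iff₀ hL2mu2]
    linarith
  rw [one_div_mul_div_sub_one_div_eq hmu1 hmu2 hL2mu2 hmuL1 h6]
  linear_combination (hA + hB') / 2

/-- one-step decrease, regime p3. -/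
theorem dca_one_step_p3
    (mu1 mu2 L1 L2 : ℝ)
    (h1 : -mu2 < mu1) (h2 : 0 < -mu2) (h3 : mu1 < L2) (h4 : mu2 < L1)
    (h5 : (1 / L1) * (2 + L2 / mu2) ≤ 1 / mu1 + 1 / mu2 + 1 / L2)
    (h6 : 1 / mu1 + 1 / mu2 + 1 / L2 ≤ 0)
    (f1 f2 : H → ℝ)
    (h1lo : HasLowerCurvature mu1 f1) (h1up : HasUpperCurvature L1 f1)
    (h2lo : HasLowerCurvature mu2 f2) (h2up : HasUpperCurvature L2 f2)
    (x xp g1 g2 g2p : H)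
    (hg2 : IsSubgradient mu2 f2 x g2) (hg1p : IsSubgradient mu1 f1 xp g2)
    (hg1 : IsSubgradient mu1 f1 x g1) (hg2p : IsSubgradient mu2 f2 xp g2p) :
    (f1 x - f2 x) - (f1 xp - f2 xp) ≥
      (1 / L1) * (1 / mu1 + 1 / mu2 + 1 / L2) / (1 / mu1 + 1 / mu2 + 1 / L2 - 1 / L1) *
        ((1 : ℝ) / 2) * ‖g1 - g2‖ ^ 2 +
      1 / (L2 + mu2) * ((1 : ℝ) / 2) * ‖g2 - g2p‖ ^ 2 :=
  dca_one_step_p3_general mu1 mu2 L1 L2 h1 h2 h3 h6 f1 f2 h1up h2up x xp g1 g2 g2p hg2 hg1p hg1 hg2p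
end

section
/- (One-step decrease, regime p4.) Let f1 ∈ F_{μ1,L1} and f2 ∈ F_{μ2,L2} with μ2 > −μ1 > 0, L2 > μ1, L1 > μ2, and (1/L2)·(2 + L1/μ1) ≤ 1/μ1 + 1/μ2 + 1/L1 ≤ 0. Let F := f1 − f2 and consider a DCA step from x to x⁺ with g2 ∈ ∂f2(x), g1⁺ ∈ ∂f1(x⁺), g1⁺ = g2, and let g1 ∈ ∂f1(x), g2⁺ ∈ ∂f2(x⁺). Then F(x) − F(x⁺) ≥ σ·(1/2)‖g1 − g2‖² + σ⁺·(1/2)‖g1⁺ − g2⁺‖², where σ = 1/(L1 + μ1) and σ⁺ = (1/L2)·(1/μ1 + 1/μ2 + 1/L1) / (1/μ1 + 1/μ2 + 1/L1 − 1/L2). -/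
open RealInnerProductSpace

variable {H : Type*} [NormedAddCommGroup H] [InnerProductSpace ℝ H]

/-!
Since `g₁⁺ = g₂`, `F x - F x⁺` is the sum of the Bregman gaps `f₁ x - f₁ x⁺ - ⟪g₂, x - x⁺⟫` and
`f₂ x⁺ - f₂ x - ⟪g₂, x⁺ - x⟫`. Both are estimated through the interpolation inequality of
`F_{μ,L}`, itself a consequence of the descent lemma at a well-chosen point. Averaging the two
interpolation inequalities of `f₁` between `x` and `x⁺` with weights `L₁` and `-μ₁` bounds the first
gap by `σ/2 ‖g₁ - g₂‖²` plus the negative term `L₁μ₁/(2(L₁ + μ₁)) ‖x - x⁺‖²`. Together with `μ₂`,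
this term leaves the curvature `ν = μ₂ + L₁μ₁/(L₁ + μ₁) ≥ 0` in the estimate of the second gap, and
minimising that estimate over `x - x⁺` gives `σ⁺/2 ‖g₂ - g₂⁺‖²`.
-/

open Set Filter Topology

theorem ConvexOn.add_inner_le_of_le_quadratic_s5 {φ : H → ℝ} (hφ : ConvexOn ℝ univ φ)
    {x v : H} {q : ℝ} (hq : ∀ y, φ y ≤ φ x + ⟪v, y - x⟫ + q * ‖y - x‖ ^ 2) (z : H) :
    φ x + ⟪v, z - x⟫ ≤ φ z := by
  have hs : ∀ s : ℝ, 0 < s → φ x + ⟪v, z - x⟫ ≤ φ z + s * (q * ‖z - x‖ ^ 2) := by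
    intro s hs
    set w := x - s • (z - x)
    have hx : (1 + s)⁻¹ • w + (s / (1 + s)) • z = x := by
      simp only [w]
      match_scalars <;> field_simp <;> ring
    have hconv := hφ.2 (mem_univ w) (mem_univ z) (by positivity) (by positivity)
      (by field_simp : (1 + s)⁻¹ + s / (1 + s) = 1)
    rw [hx, smul_eq_mul, smul_eq_mul] at hconv
    have hw := hq w
    rw [show w - x = -(s • (z - x)) by simp only [w]; abel, inner_neg_right,
      real_inner_smul_right, norm_neg, norm_smul, Real.norm_eq_abs, mul_pow, sq_abs] at hw
    have h1s : (1 + s) * φ x ≤ φ w + s * φ z := by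
      have := mul_le_mul_of_nonneg_left hconv (by positivity : (0 : ℝ) ≤ 1 + s)
      field_simp at this
      linarith
    nlinarith
  have hlim : Tendsto (fun s => φ z + s * (q * ‖z - x‖ ^ 2)) (𝓝[>] 0) (𝓝 (φ z)) := by
    have : Tendsto (fun s => φ z + s * (q * ‖z - x‖ ^ 2)) (𝓝 0) (𝓝 (φ z + 0 * _)) :=
      (continuous_const.add (continuous_id.mul continuous_const)).tendsto 0
    simpa using this.mono_left nhdsWithin_le_nhds
  exact ge_of_tendsto hlim (eventually_nhdsWithin_of_forall hs)

theorem HasUpperCurvature.le_add_inner_add_sq {μ L : ℝ} {f : H → ℝ}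
    (hf : HasUpperCurvature L f) {x g : H} (hg : IsSubgradient μ f x g) (z : H) :
    f z ≤ f x + ⟪g, z - x⟫ + L / 2 * ‖z - x‖ ^ 2 := by
  have hnorm (y : H) : ‖y‖ ^ 2 = ‖x‖ ^ 2 + 2 * ⟪x, y - x⟫ + ‖y - x‖ ^ 2 := by
    rw [← norm_add_sq_real, add_sub_cancel]
  -- `L • x - g` is a subgradient of the convex function `L/2 ‖·‖² - f` at `x`
  have key := hf.add_inner_le_of_le_quadratic_s5 (x := x) (v := L • x - g) (q := (L - μ) / 2)
    (fun y => by
      have := hg y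
      rw [hnorm y, inner_sub_left, real_inner_smul_left]
      linarith) z
  rw [hnorm z, inner_sub_left, real_inner_smul_left] at key
  linarith

theorem HasUpperCurvature.subsingleton_of_lt {μ L : ℝ} {f : H → ℝ} (hf : HasUpperCurvature L f)
    {x g : H} (hg : IsSubgradient μ f x g) (hLμ : L < μ) : Subsingleton H := by
  have hx (z : H) : z = x := by
    have h1 := hf.le_add_inner_add_sq hg z
    have h2 := hg z
    have : ‖z - x‖ ^ 2 ≤ 0 := by nlinarith
    simpa [sub_eq_zero] using this
  exact ⟨fun a b => (hx a).trans (hx b).symm⟩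

theorem HasUpperCurvature.interpolation {μ L : ℝ} {f : H → ℝ} (hf : HasUpperCurvature L f)
    (hμL : μ ≤ L) {x y gx gy : H} (hx : IsSubgradient μ f x gx) (hy : IsSubgradient μ f y gy) :
    1 / 2 * ‖gx - gy - μ • (x - y)‖ ^ 2 ≤
      (L - μ) * (f x - f y - ⟪gy, x - y⟫ - μ / 2 * ‖x - y‖ ^ 2) := by
  set w := gx - gy - μ • (x - y)
  set D := f x - f y - ⟪gy, x - y⟫ - μ / 2 * ‖x - y‖ ^ 2
  have hw : ‖w‖ ^ 2 = ⟪gx, w⟫ - ⟪gy, w⟫ - μ * ⟪x - y, w⟫ := by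
    rw [← real_inner_self_eq_norm_sq]
    simp only [w, inner_sub_left, real_inner_smul_left]
  -- compare the upper bound at `x` with the lower bound at `y`, both taken at `x - t • w`
  have hquad (t : ℝ) : 0 ≤ ((L - μ) / 2 * ‖w‖ ^ 2) * (t * t) + (-‖w‖ ^ 2) * t + D := by
    have hup := hf.le_add_inner_add_sq hx (x - t • w)
    have hlo := hy (x - t • w)
    rw [sub_sub_cancel_left, inner_neg_right, real_inner_smul_right, norm_neg, norm_smul,
      Real.norm_eq_abs, mul_pow, sq_abs] at hup
    rw [sub_right_comm, inner_sub_right, real_inner_smul_right, norm_sub_sq_real,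
      real_inner_smul_right, norm_smul, Real.norm_eq_abs, mul_pow, sq_abs] at hlo
    have htw := congrArg (t * ·) hw
    simp only [D]
    linarith
  have hdisc := discrim_le_zero hquad
  have hD : 0 ≤ D := by simpa using hquad 0
  rw [discrim] at hdisc
  nlinarith [sq_nonneg ‖w‖, mul_nonneg (sub_nonneg.2 hμL) hD]

theorem HasUpperCurvature.bregman_ge_of_nonpos {μ L : ℝ} {f : H → ℝ}
    (hf : HasUpperCurvature L f) (hμ : μ ≤ 0) (hLμ : 0 < L + μ) {x x' g g' : H}
    (hg : IsSubgradient μ f x g) (hg' : IsSubgradient μ f x' g') :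
    1 / (L + μ) * (1 / 2) * ‖g - g'‖ ^ 2 + L * μ / (L + μ) * (1 / 2) * ‖x - x'‖ ^ 2 ≤
      f x - f x' - ⟪g', x - x'⟫ := by
  have hμL : μ ≤ L := by linarith
  have h₁ := hf.interpolation hμL hg hg'
  have h₂ := hf.interpolation hμL hg' hg
  have hinner : ⟪g, x' - x⟫ = -(⟪g - g', x - x'⟫ + ⟪g', x - x'⟫) := by
    rw [← neg_sub x, inner_neg_right, inner_sub_left, sub_add_cancel]
  rw [show g' - g - μ • (x' - x) = -(g - g' - μ • (x - x')) by module, norm_neg, hinner,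
    norm_sub_rev x'] at h₂
  have hexp : ‖g - g' - μ • (x - x')‖ ^ 2 =
      ‖g - g'‖ ^ 2 - 2 * μ * ⟪g - g', x - x'⟫ + μ ^ 2 * ‖x - x'‖ ^ 2 := by
    rw [norm_sub_sq_real, real_inner_smul_right, norm_smul, Real.norm_eq_abs, mul_pow, sq_abs]
    ring
  -- the weights `L` and `-μ` make the terms in `⟪g - g', x - x'⟫` cancel
  have hcomb : (L - μ) * (1 / 2 * ‖g - g'‖ ^ 2 + L * μ / 2 * ‖x - x'‖ ^ 2 -
      (L + μ) * (f x - f x' - ⟪g', x - x'⟫)) ≤ 0 := by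
    nlinarith [mul_le_mul_of_nonneg_left h₁ (by linarith : 0 ≤ L),
      mul_le_mul_of_nonneg_left h₂ (neg_nonneg.2 hμ)]
  have hle := nonpos_of_mul_nonpos_right hcomb (by linarith)
  calc 1 / (L + μ) * (1 / 2) * ‖g - g'‖ ^ 2 + L * μ / (L + μ) * (1 / 2) * ‖x - x'‖ ^ 2
      = (1 / 2 * ‖g - g'‖ ^ 2 + L * μ / 2 * ‖x - x'‖ ^ 2) / (L + μ) := by ring
    _ ≤ f x - f x' - ⟪g', x - x'⟫ := by rw [div_le_iff₀ hLμ]; linarith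

/-- The constant `ν / (ν (L - μ) + μ²)` is the minimum of `ν ‖d‖² + ‖b - μ d‖² / (L - μ)` over `d`
for `‖b‖ = 1`. -/
theorem HasUpperCurvature.bregman_add_sq_ge {μ L ν : ℝ} {f : H → ℝ}
    (hf : HasUpperCurvature L f) (hμL : μ ≤ L) (hν : 0 ≤ ν) {x x' g g' : H}
    (hg : IsSubgradient μ f x g) (hg' : IsSubgradient μ f x' g') :
    ν / (ν * (L - μ) + μ ^ 2) * (1 / 2) * ‖g - g'‖ ^ 2 ≤
      f x' - f x - ⟪g, x' - x⟫ + (ν - μ) / 2 * ‖x - x'‖ ^ 2 := by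
  have hinterp := hf.interpolation hμL hg' hg
  have hsub := hg x'
  set u := g' - g - μ • (x' - x)
  set S := f x' - f x - ⟪g, x' - x⟫ - μ / 2 * ‖x' - x‖ ^ 2
  have hS : 0 ≤ S := by simp only [S]; linarith
  have hu : ‖u‖ ^ 2 ≤ 2 * (L - μ) * S := by linarith
  have hgg : ‖g - g'‖ ^ 2 = ‖u‖ ^ 2 + 2 * μ * ⟪u, x' - x⟫ + μ ^ 2 * ‖x' - x‖ ^ 2 := by
    rw [show g - g' = -(u + μ • (x' - x)) by simp only [u]; abel, norm_neg, norm_add_sq_real,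
      real_inner_smul_right, norm_smul, Real.norm_eq_abs, mul_pow, sq_abs]
    ring
  have hcross : 2 * ν * μ * ⟪u, x' - x⟫ ≤ 2 * μ ^ 2 * S + ν ^ 2 * (L - μ) * ‖x' - x‖ ^ 2 := by
    rcases (sub_nonneg.2 hμL).eq_or_lt with he | he
    · rw [← he, mul_zero, zero_mul] at hu
      have hu0 : u = 0 :=
        norm_eq_zero.1 ((pow_eq_zero_iff two_ne_zero).1 (le_antisymm hu (sq_nonneg _)))
      rw [hu0, inner_zero_left, ← he]
      nlinarith [mul_nonneg (sq_nonneg μ) hS]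
    · have hsq : 0 ≤ ‖μ • u - (ν * (L - μ)) • (x' - x)‖ ^ 2 := sq_nonneg _
      rw [norm_sub_sq_real, real_inner_smul_left, real_inner_smul_right, norm_smul, norm_smul,
        Real.norm_eq_abs, Real.norm_eq_abs, mul_pow, mul_pow, sq_abs, sq_abs] at hsq
      nlinarith [mul_le_mul_of_nonneg_left hu (sq_nonneg μ)]
  rw [norm_sub_rev x, show f x' - f x - ⟪g, x' - x⟫ + (ν - μ) / 2 * ‖x' - x‖ ^ 2 =
    S + ν / 2 * ‖x' - x‖ ^ 2 by simp only [S]; ring]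
  rcases (add_nonneg (mul_nonneg hν (sub_nonneg.2 hμL)) (sq_nonneg μ)).eq_or_lt with hd | hd
  · rw [← hd, div_zero, zero_mul, zero_mul]
    positivity
  · rw [div_mul_eq_mul_div, div_mul_eq_mul_div, div_le_iff₀ hd, hgg]
    linarith [mul_le_mul_of_nonneg_left hu hν]

theorem residual_curvature_nonneg {mu1 mu2 L1 : ℝ} (hmu1 : mu1 < 0) (hmu2 : 0 < mu2)
    (hL1mu1 : 0 < L1 + mu1) (hsum : 1 / mu1 + 1 / mu2 + 1 / L1 ≤ 0) :
    0 ≤ mu2 + L1 * mu1 / (L1 + mu1) := by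
  have hL1 : 0 < L1 := by linarith
  rw [show mu2 + L1 * mu1 / (L1 + mu1) =
      mu1 * mu2 * L1 * (1 / mu1 + 1 / mu2 + 1 / L1) / (L1 + mu1) by
    field_simp [hmu1.ne, hmu2.ne', hL1.ne', hL1mu1.ne']; ring]
  exact div_nonneg (mul_nonneg_of_nonpos_of_nonpos (by nlinarith [mul_pos hmu2 hL1]) hsum)
    hL1mu1.le

theorem residual_curvature_div_eq {mu1 mu2 L1 L2 : ℝ} (hmu1 : mu1 < 0) (hmu2 : 0 < mu2)
    (hL1mu1 : 0 < L1 + mu1) (hL2 : mu2 ≤ L2) (hsum : 1 / mu1 + 1 / mu2 + 1 / L1 ≤ 0) :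
    (mu2 + L1 * mu1 / (L1 + mu1)) / ((mu2 + L1 * mu1 / (L1 + mu1)) * (L2 - mu2) + mu2 ^ 2) =
      (1 / L2) * (1 / mu1 + 1 / mu2 + 1 / L1) / (1 / mu1 + 1 / mu2 + 1 / L1 - 1 / L2) := by
  have hL1 : 0 < L1 := by linarith
  have hL2' : 0 < L2 := by linarith
  have hden₁ : 0 < (mu2 + L1 * mu1 / (L1 + mu1)) * (L2 - mu2) + mu2 ^ 2 := by
    have := mul_nonneg (residual_curvature_nonneg hmu1 hmu2 hL1mu1 hsum) (sub_nonneg.2 hL2)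
    positivity
  have hden₂ : 1 / mu1 + 1 / mu2 + 1 / L1 - 1 / L2 < 0 := by
    have : 0 < 1 / L2 := by positivity
    linarith
  rw [div_eq_div_iff hden₁.ne' hden₂.ne]
  field_simp [hmu1.ne, hmu2.ne', hL1.ne', hL2'.ne', hL1mu1.ne']
  ring

theorem dca_one_step_p4_general
    (mu1 mu2 L1 L2 : ℝ)
    (h1 : -mu1 < mu2) (h2 : 0 < -mu1) (h4 : mu2 < L1)
    (h6 : 1 / mu1 + 1 / mu2 + 1 / L1 ≤ 0)
    (f1 f2 : H → ℝ)
    (h1up : HasUpperCurvature L1 f1)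
    (h2up : HasUpperCurvature L2 f2)
    (x xp g1 g2 g2p : H)
    (hg2 : IsSubgradient mu2 f2 x g2) (hg1p : IsSubgradient mu1 f1 xp g2)
    (hg1 : IsSubgradient mu1 f1 x g1) (hg2p : IsSubgradient mu2 f2 xp g2p) :
    (f1 x - f2 x) - (f1 xp - f2 xp) ≥
      1 / (L1 + mu1) * ((1 : ℝ) / 2) * ‖g1 - g2‖ ^ 2 +
      (1 / L2) * (1 / mu1 + 1 / mu2 + 1 / L1) / (1 / mu1 + 1 / mu2 + 1 / L1 - 1 / L2) *
        ((1 : ℝ) / 2) * ‖g2 - g2p‖ ^ 2 := by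
  obtain hL2 | hL2 := lt_or_ge L2 mu2
  · have := h2up.subsingleton_of_lt hg2 hL2
    simp [Subsingleton.elim xp x, Subsingleton.elim g1 g2, Subsingleton.elim g2p g2]
  have hmu1 : mu1 < 0 := by linarith
  have hmu2 : 0 < mu2 := by linarith
  have hL1mu1 : 0 < L1 + mu1 := by linarith
  have hT1 := h1up.bregman_ge_of_nonpos hmu1.le hL1mu1 hg1 hg1p
  have hT2 := h2up.bregman_add_sq_ge hL2 (residual_curvature_nonneg hmu1 hmu2 hL1mu1 h6) hg2 hg2p
  rw [residual_curvature_div_eq hmu1 hmu2 hL1mu1 hL2 h6] at hT2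
  have hinner : ⟪g2, xp - x⟫ = -⟪g2, x - xp⟫ := by rw [← neg_sub, inner_neg_right]
  linarith

/-- one-step decrease, regime p4. -/
theorem dca_one_step_p4
    (mu1 mu2 L1 L2 : ℝ)
    (h1 : -mu1 < mu2) (h2 : 0 < -mu1) (h3 : mu1 < L2) (h4 : mu2 < L1)
    (h5 : (1 / L2) * (2 + L1 / mu1) ≤ 1 / mu1 + 1 / mu2 + 1 / L1)
    (h6 : 1 / mu1 + 1 / mu2 + 1 / L1 ≤ 0)
    (f1 f2 : H → ℝ)
    (h1lo : HasLowerCurvature mu1 f1) (h1up : HasUpperCurvature L1 f1)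
    (h2lo : HasLowerCurvature mu2 f2) (h2up : HasUpperCurvature L2 f2)
    (x xp g1 g2 g2p : H)
    (hg2 : IsSubgradient mu2 f2 x g2) (hg1p : IsSubgradient mu1 f1 xp g2)
    (hg1 : IsSubgradient mu1 f1 x g1) (hg2p : IsSubgradient mu2 f2 xp g2p) :
    (f1 x - f2 x) - (f1 xp - f2 xp) ≥
      1 / (L1 + mu1) * ((1 : ℝ) / 2) * ‖g1 - g2‖ ^ 2 +
      (1 / L2) * (1 / mu1 + 1 / mu2 + 1 / L1) / (1 / mu1 + 1 / mu2 + 1 / L1 - 1 / L2) *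
        ((1 : ℝ) / 2) * ‖g2 - g2p‖ ^ 2 :=
  dca_one_step_p4_general mu1 mu2 L1 L2 h1 h2 h4 h6 f1 f2 h1up h2up x xp g1 g2 g2p hg2 hg1p hg1 hg2p
end

section
/- (One-step decrease, regime p7.) Let f1 ∈ F_{μ1,L1} and f2 ∈ F_{μ2,L2} with L1 > μ1 > L2 > 0, μ2 < L2, μ1 + μ2 > 0, and μ2/μ1 + 1 + μ2/L2 ≥ 0 (i.e., μ2·(1/μ1 + 1/μ2 + 1/L2) ≥ 0). Let F := f1 − f2 and consider a DCA step from x to x⁺ with g2 ∈ ∂f2(x), g1⁺ ∈ ∂f1(x⁺), g1⁺ = g2, and let g2⁺ ∈ ∂f2(x⁺). Then F(x) − F(x⁺) ≥ ((L2 + μ1)/L2²)·(1/2)‖g1⁺ − g2⁺‖². -/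
open RealInnerProductSpace

variable {H : Type*} [NormedAddCommGroup H] [InnerProductSpace ℝ H]

lemma upper_bound_of_subgradient {L μ : ℝ} {f : H → ℝ} (hup : HasUpperCurvature L f)
    {x g : H} (hg : IsSubgradient μ f x g) (y : H) :
    f y ≤ f x + ⟪g, y - x⟫ + L / 2 * ‖y - x‖ ^ 2 := by
  obtain ⟨d, hd⟩ : ∃ d, d = y - x := ⟨_, rfl⟩
  obtain ⟨c, hc0⟩ : ∃ c, c = (L - μ) / 2 * ‖d‖ ^ 2 := ⟨_, rfl⟩
  have hy : y = x + d := by rw [hd]; abel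
  have key : ∀ t : ℝ, 0 < t → t ≤ 1 →
      L * ⟪x, d⟫ - ⟪g, d⟫ - t * c ≤
        (L / 2 * ‖y‖ ^ 2 - f y) - (L / 2 * ‖x‖ ^ 2 - f x) := by
    intro t ht ht1
    have hconv : L / 2 * ‖x + t • d‖ ^ 2 - f (x + t • d) ≤
        (1 - t) * (L / 2 * ‖x‖ ^ 2 - f x) + t * (L / 2 * ‖y‖ ^ 2 - f y) := by
      have h := hup.2 (Set.mem_univ x) (Set.mem_univ y) (by linarith : (0:ℝ) ≤ 1 - t)
        ht.le (by ring)
      have hpt : (1 - t) • x + t • y = x + t • d := by rw [hd]; module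
      simpa [hpt] using h
    have hmid : L / 2 * ‖x‖ ^ 2 - f x ≤
        1/2 * (L / 2 * ‖x + t • d‖ ^ 2 - f (x + t • d)) +
        1/2 * (L / 2 * ‖x - t • d‖ ^ 2 - f (x - t • d)) := by
      have h := hup.2 (Set.mem_univ (x + t • d)) (Set.mem_univ (x - t • d))
        (by norm_num : (0:ℝ) ≤ 1/2) (by norm_num : (0:ℝ) ≤ 1/2) (by norm_num)
      have hpt : (1/2 : ℝ) • (x + t • d) + (1/2 : ℝ) • (x - t • d) = x := by module
      rw [hpt] at h
      simpa using h
    have hsub := hg (x - t • d)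
    have hxd : (x - t • d) - x = -(t • d) := by abel
    have hnormm : ‖x - t • d‖ ^ 2 = ‖x‖ ^ 2 - 2 * (t * ⟪x, d⟫) + t ^ 2 * ‖d‖ ^ 2 := by
      rw [norm_sub_sq_real, real_inner_smul_right, norm_smul, Real.norm_eq_abs, mul_pow, sq_abs]
    have hnormp : ‖x + t • d‖ ^ 2 = ‖x‖ ^ 2 + 2 * (t * ⟪x, d⟫) + t ^ 2 * ‖d‖ ^ 2 := by
      rw [norm_add_sq_real, real_inner_smul_right, norm_smul, Real.norm_eq_abs, mul_pow, sq_abs]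
    have hnormy : ‖y‖ ^ 2 = ‖x‖ ^ 2 + 2 * ⟪x, d⟫ + ‖d‖ ^ 2 := by
      rw [hy, norm_add_sq_real]
    have hinner : ⟪g, (x - t • d) - x⟫ = -(t * ⟪g, d⟫) := by
      rw [hxd, inner_neg_right, real_inner_smul_right]
    have hnorm2 : ‖(x - t • d) - x‖ ^ 2 = t ^ 2 * ‖d‖ ^ 2 := by
      rw [hxd, norm_neg, norm_smul, Real.norm_eq_abs, mul_pow, sq_abs]
    rw [hinner, hnorm2] at hsub
    rw [hnormp] at hconv hmid
    rw [hnormm] at hmid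
    rw [hnormy] at hconv
    have h3 : t * (L * ⟪x, d⟫ - ⟪g, d⟫ - t * c) ≤
        t * ((L / 2 * (‖x‖ ^ 2 + 2 * ⟪x, d⟫ + ‖d‖ ^ 2) - f y) - (L / 2 * ‖x‖ ^ 2 - f x)) := by
      rw [hc0]; nlinarith [hconv, hmid, hsub]
    rw [hnormy]
    exact le_of_mul_le_mul_left h3 ht
  have hgoal : L * ⟪x, d⟫ - ⟪g, d⟫ ≤
      (L / 2 * ‖y‖ ^ 2 - f y) - (L / 2 * ‖x‖ ^ 2 - f x) := by
    rcases le_or_gt c 0 with hcn | hcp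
    · have := key 1 one_pos le_rfl
      linarith
    · refine le_of_forall_pos_le_add fun ε hε => ?_
      have hct : 0 < min 1 (ε / c) := lt_min one_pos (div_pos hε hcp)
      have := key (min 1 (ε / c)) hct (min_le_left _ _)
      have h2 : min 1 (ε / c) * c ≤ ε := by
        calc min 1 (ε / c) * c ≤ (ε / c) * c :=
              mul_le_mul_of_nonneg_right (min_le_right _ _) hcp.le
          _ = ε := by field_simp
      linarith
  have hexp : L / 2 * ‖y‖ ^ 2 = L / 2 * ‖x‖ ^ 2 + L * ⟪x, d⟫ + L / 2 * ‖d‖ ^ 2 := by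
    rw [hy, norm_add_sq_real]; ring
  rw [← hd]
  linarith [hgoal, hexp]

lemma cocoercive {L μ : ℝ} {f : H → ℝ} (hup : HasUpperCurvature L f) (hK : 0 < L - μ)
    {u v gu gv : H} (hgu : IsSubgradient μ f u gu) (hgv : IsSubgradient μ f v gv) :
    f v ≥ f u + ⟪gu, v - u⟫ + μ / 2 * ‖v - u‖ ^ 2
      + 1 / (2 * (L - μ)) * ‖gv - gu - μ • (v - u)‖ ^ 2 := by
  set s : ℝ := (L - μ)⁻¹ with hs0
  have hs : (L - μ) * s = 1 := mul_inv_cancel₀ hK.ne'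
  set w : H := gv - gu - μ • (v - u) with hw0
  have h1 := hgu (v - s • w)
  have h2 := upper_bound_of_subgradient hup hgv (v - s • w)
  have ezv : (v - s • w) - v = -(s • w) := by abel
  have ezu : (v - s • w) - u = (v - u) - s • w := by abel
  have n1 : ‖(v - s • w) - v‖ ^ 2 = s ^ 2 * ‖w‖ ^ 2 := by
    rw [ezv, norm_neg, norm_smul, Real.norm_eq_abs, mul_pow, sq_abs]
  have i1 : ⟪gv, (v - s • w) - v⟫ = -(s * ⟪gv, w⟫) := by
    rw [ezv, inner_neg_right, real_inner_smul_right]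
  have n2 : ‖(v - s • w) - u‖ ^ 2
      = ‖v - u‖ ^ 2 - 2 * (s * ⟪v - u, w⟫) + s ^ 2 * ‖w‖ ^ 2 := by
    rw [ezu, norm_sub_sq_real, real_inner_smul_right, norm_smul, Real.norm_eq_abs, mul_pow, sq_abs]
  have i2 : ⟪gu, (v - s • w) - u⟫ = ⟪gu, v - u⟫ - s * ⟪gu, w⟫ := by
    rw [ezu, inner_sub_right, real_inner_smul_right]
  rw [i1, n1] at h2
  rw [i2, n2] at h1
  have hw : ⟪gv, w⟫ - ⟪gu, w⟫ = ‖w‖ ^ 2 + μ * ⟪v - u, w⟫ := by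
    have hgvgu : gv - gu = w + μ • (v - u) := by rw [hw0]; abel
    have : ⟪gv - gu, w⟫ = ⟪w + μ • (v - u), w⟫ := by rw [hgvgu]
    rw [inner_sub_left, inner_add_left, real_inner_smul_left,
      real_inner_self_eq_norm_sq] at this
    exact this
  have hws : s * (⟪gv, w⟫ - ⟪gu, w⟫) = s * (‖w‖ ^ 2 + μ * ⟪v - u, w⟫) := by rw [hw]
  have hzz : ((L - μ) * s - 1) * (s * ‖w‖ ^ 2) = 0 := by rw [hs]; ring
  have hseq : 1 / (2 * (L - μ)) = s / 2 := by
    rw [hs0]; rw [one_div, mul_inv]; ring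
  rw [hseq]
  nlinarith [h1, h2, hws, hzz]

/-- one-step decrease, regime p7. -/
theorem dca_one_step_p7
    (mu1 mu2 L1 L2 : ℝ)
    (h1 : mu1 < L1) (h2 : L2 < mu1) (h3 : 0 < L2) (h4 : mu2 < L2)
    (h5 : 0 < mu1 + mu2)
    (h6 : mu2 / mu1 + 1 + mu2 / L2 ≥ 0)
    (f1 f2 : H → ℝ)
    (h1lo : HasLowerCurvature mu1 f1) (h1up : HasUpperCurvature L1 f1)
    (h2lo : HasLowerCurvature mu2 f2) (h2up : HasUpperCurvature L2 f2)
    (x xp g2 g2p : H)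
    (hg2 : IsSubgradient mu2 f2 x g2) (hg1p : IsSubgradient mu1 f1 xp g2)
    (hg2p : IsSubgradient mu2 f2 xp g2p) :
    (f1 x - f2 x) - (f1 xp - f2 xp) ≥
      (L2 + mu1) / L2 ^ 2 * ((1 : ℝ) / 2) * ‖g2 - g2p‖ ^ 2 := by
  have hK : 0 < L2 - mu2 := by linarith
  have hmu1 : 0 < mu1 := h3.trans h2
  obtain ⟨w, hw0⟩ : ∃ w, w = g2 - g2p - mu2 • (x - xp) := ⟨_, rfl⟩
  have hI1 := hg1p x
  have hI2 := cocoercive h2up hK hg2 hg2p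
  have hI3 := cocoercive h2up hK hg2p hg2
  have e1 : xp - x = -(x - xp) := by abel
  have e2 : g2p - g2 - mu2 • (xp - x) = -w := by rw [hw0]; module
  rw [e2, e1, norm_neg, norm_neg, inner_neg_right] at hI2
  rw [← hw0] at hI3
  -- relation between ⟪w, x - xp⟫ and inner products of g2, g2p
  have hEeq : ⟪w, x - xp⟫ = ⟪g2, x - xp⟫ - ⟪g2p, x - xp⟫ - mu2 * ‖x - xp‖ ^ 2 := by
    rw [hw0, inner_sub_left, inner_sub_left, real_inner_smul_left, real_inner_self_eq_norm_sq]
  -- co-coercivity scalar: (L2 - mu2) * E ≥ S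
  have hKE : (L2 - mu2) * ⟪w, x - xp⟫ - ‖w‖ ^ 2 ≥ 0 := by
    have hsum : ⟪g2, x - xp⟫ - ⟪g2p, x - xp⟫ - mu2 * ‖x - xp‖ ^ 2
        ≥ 2 * (1 / (2 * (L2 - mu2)) * ‖w‖ ^ 2) := by
      linarith [hI2, hI3]
    rw [← hEeq] at hsum
    have hmul := mul_le_mul_of_nonneg_left hsum hK.le
    have hclear : (L2 - mu2) * (2 * (1 / (2 * (L2 - mu2)) * ‖w‖ ^ 2)) = ‖w‖ ^ 2 := by
      field_simp
    rw [hclear] at hmul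
    linarith [hmul]
  -- Cauchy–Schwarz-style nonnegativity
  have hCS : 0 ≤ ‖w‖ ^ 2 - 2 * ((L2 - mu2) * ⟪w, x - xp⟫) + (L2 - mu2) ^ 2 * ‖x - xp‖ ^ 2 := by
    have hexp : ‖w - (L2 - mu2) • (x - xp)‖ ^ 2
        = ‖w‖ ^ 2 - 2 * ((L2 - mu2) * ⟪w, x - xp⟫) + (L2 - mu2) ^ 2 * ‖x - xp‖ ^ 2 := by
      rw [norm_sub_sq_real, real_inner_smul_right, norm_smul, Real.norm_eq_abs, mul_pow, sq_abs]
    linarith [hexp ▸ sq_nonneg ‖w - (L2 - mu2) • (x - xp)‖]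
  -- ‖g2 - g2p‖² in terms of w
  have hB : ‖g2 - g2p‖ ^ 2
      = ‖w‖ ^ 2 + 2 * (mu2 * ⟪w, x - xp⟫) + mu2 ^ 2 * ‖x - xp‖ ^ 2 := by
    have hid : g2 - g2p = w + mu2 • (x - xp) := by rw [hw0]; abel
    rw [hid, norm_add_sq_real, real_inner_smul_right, norm_smul, Real.norm_eq_abs, mul_pow,
      sq_abs]
  -- P ≥ 0 from h6
  have hP : 0 ≤ mu2 * L2 + mu1 * L2 + mu1 * mu2 := by
    have hprod : 0 ≤ (mu2 / mu1 + 1 + mu2 / L2) * (mu1 * L2) :=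
      mul_nonneg h6 (by positivity)
    have heq : (mu2 / mu1 + 1 + mu2 / L2) * (mu1 * L2)
        = mu2 * L2 + mu1 * L2 + mu1 * mu2 := by
      field_simp
    linarith [heq ▸ hprod]
  -- lower bound on the decrease
  have hlow : (f1 x - f2 x) - (f1 xp - f2 xp)
      ≥ (mu1 + mu2) / 2 * ‖x - xp‖ ^ 2 + 1 / (2 * (L2 - mu2)) * ‖w‖ ^ 2 := by
    linarith [hI1, hI2]
  -- final scalar certificate
  have hcert : (2 * (L2 - mu2) * L2 ^ 2) *
      ((mu1 + mu2) / 2 * ‖x - xp‖ ^ 2 + 1 / (2 * (L2 - mu2)) * ‖w‖ ^ 2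
        - (L2 + mu1) / L2 ^ 2 * ((1 : ℝ) / 2)
          * (‖w‖ ^ 2 + 2 * (mu2 * ⟪w, x - xp⟫) + mu2 ^ 2 * ‖x - xp‖ ^ 2))
      = (mu2 * L2 + mu1 * L2 + mu1 * mu2)
          * (‖w‖ ^ 2 - 2 * ((L2 - mu2) * ⟪w, x - xp⟫) + (L2 - mu2) ^ 2 * ‖x - xp‖ ^ 2)
        + 2 * mu1 * L2 * ((L2 - mu2) * ⟪w, x - xp⟫ - ‖w‖ ^ 2) := by
    field_simp
    ring
  have hrhs : 0 ≤ (mu2 * L2 + mu1 * L2 + mu1 * mu2)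
          * (‖w‖ ^ 2 - 2 * ((L2 - mu2) * ⟪w, x - xp⟫) + (L2 - mu2) ^ 2 * ‖x - xp‖ ^ 2)
        + 2 * mu1 * L2 * ((L2 - mu2) * ⟪w, x - xp⟫ - ‖w‖ ^ 2) :=
    add_nonneg (mul_nonneg hP hCS) (mul_nonneg (by positivity) hKE)
  have hfac : (0:ℝ) < 2 * (L2 - mu2) * L2 ^ 2 := by positivity
  have hmain : 0 ≤ (mu1 + mu2) / 2 * ‖x - xp‖ ^ 2 + 1 / (2 * (L2 - mu2)) * ‖w‖ ^ 2
        - (L2 + mu1) / L2 ^ 2 * ((1 : ℝ) / 2)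
          * (‖w‖ ^ 2 + 2 * (mu2 * ⟪w, x - xp⟫) + mu2 ^ 2 * ‖x - xp‖ ^ 2) := by
    have h0 : 2 * (L2 - mu2) * L2 ^ 2 * (0:ℝ) ≤ 2 * (L2 - mu2) * L2 ^ 2 *
        ((mu1 + mu2) / 2 * ‖x - xp‖ ^ 2 + 1 / (2 * (L2 - mu2)) * ‖w‖ ^ 2
          - (L2 + mu1) / L2 ^ 2 * ((1 : ℝ) / 2)
            * (‖w‖ ^ 2 + 2 * (mu2 * ⟪w, x - xp⟫) + mu2 ^ 2 * ‖x - xp‖ ^ 2)) := by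
      rw [mul_zero, hcert]; exact hrhs
    exact le_of_mul_le_mul_left h0 hfac
  rw [hB]
  linarith [hlow, hmain]
end

section
/- (DCA sublinear rate, regime p3.) Let f1 ∈ F_{μ1,L1} and f2 ∈ F_{μ2,L2} with μ1 > −μ2 > 0, L2 > μ1, L1 > μ2, and (1/L1)·(2 + L2/μ2) ≤ 1/μ1 + 1/μ2 + 1/L2 ≤ 0. Let F := f1 − f2, let N ≥ 1, and let x⁰, …, x^N be a DCA sequence with subgradients g1^k ∈ ∂f1(x^k), g2^k ∈ ∂f2(x^k). Then (1/2)·min_{0 ≤ k ≤ N} ‖g1^k − g2^k‖² ≤ (F(x⁰) − F(x^N)) / (p·N), where p = (1/L1)·(1/μ1 + 1/μ2 + 1/L2)/(1/μ1 + 1/μ2 + 1/L2 − 1/L1) + 1/(L2 + μ2). -/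
open RealInnerProductSpace

variable {H : Type*} [NormedAddCommGroup H] [InnerProductSpace ℝ H]

/-!
Write `F = f₁ - f₂` and look at one DCA step `a = xᵏ`, `b = xᵏ⁺¹`, where `u₂ = g₁ᵏ⁺¹ = g₂ᵏ` is a
subgradient of `f₁` at `b` and of `f₂` at `a`. Combining the two interpolation inequalities of
`F_{μ₂,L₂}` between `a` and `b` (weights `L₂` and `-μ₂`) bounds `F a - F b` below by
`‖g₁ᵏ⁺¹ - g₂ᵏ⁺¹‖² / (2 (L₂ + μ₂)) + T / (2 (L₂ + μ₂)) ‖a - b‖² + E`, where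
`T = μ₁μ₂ + μ₁L₂ + μ₂L₂ ≥ 0` because `1/μ₁ + 1/μ₂ + 1/L₂ ≤ 0`, and `E ≥ 0` is the gap in the
subgradient inequality of `f₁` at `b`. The interpolation inequality of `F_{μ₁,L₁}` bounds `E` below
by a multiple of `‖g₁ᵏ - g₂ᵏ - μ₁ (a - b)‖²`, and minimising over `a - b` leaves
`q/2 ‖g₁ᵏ - g₂ᵏ‖²`, where `q` is the first summand of `p`. Summing over the steps telescopes `F`,
and every gradient gap dominates the minimal one.
-/

open Filter Topology

theorem ConvexOn.add_inner_sub_le_of_forall_le {ψ : H → ℝ} (hψ : ConvexOn ℝ Set.univ ψ)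
    {y u : H} {c : ℝ} (h : ∀ z, ψ z ≤ ψ y + ⟪u, z - y⟫ + c * ‖z - y‖ ^ 2) (z : H) :
    ψ y + ⟪u, z - y⟫ ≤ ψ z := by
  -- convexity along the line through `z` and `y`, against the quadratic bound at the point
  -- `y + t • (y - z)` on the far side of `y`; then let `t → 0`
  have key : ∀ t > (0 : ℝ), ψ y + ⟪u, z - y⟫ - t * (c * ‖z - y‖ ^ 2) ≤ ψ z := by
    intro t ht
    have hy : (1 / (1 + t)) • (y + t • (y - z)) + (t / (1 + t)) • z = y := by
      match_scalars <;> field_simp; ring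
    have hconv := hψ.2 (Set.mem_univ (y + t • (y - z))) (Set.mem_univ z)
      (show 0 ≤ 1 / (1 + t) by positivity) (show 0 ≤ t / (1 + t) by positivity) (by field_simp)
    rw [hy, smul_eq_mul, smul_eq_mul] at hconv
    have hback := h (y + t • (y - z))
    rw [show y + t • (y - z) - y = (-t) • (z - y) by module, inner_smul_right, norm_smul,
      Real.norm_eq_abs, mul_pow, sq_abs] at hback
    have hmul : (1 + t) * ψ y ≤ ψ (y + t • (y - z)) + t * ψ z := by
      calc (1 + t) * ψ y ≤ (1 + t) * (1 / (1 + t) * ψ (y + t • (y - z)) + t / (1 + t) * ψ z) := by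
            gcongr
        _ = ψ (y + t • (y - z)) + t * ψ z := by field_simp
    exact le_of_mul_le_mul_left (by linarith) ht
  have hlim : Tendsto (fun t : ℝ => ψ y + ⟪u, z - y⟫ - t * (c * ‖z - y‖ ^ 2)) (𝓝[>] 0)
      (𝓝 (ψ y + ⟪u, z - y⟫)) := by
    have : Continuous fun t : ℝ => ψ y + ⟪u, z - y⟫ - t * (c * ‖z - y‖ ^ 2) := by fun_prop
    simpa using (this.tendsto 0).mono_left nhdsWithin_le_nhds
  exact le_of_tendsto hlim (eventually_nhdsWithin_of_forall key)

theorem le_two_mul_of_forall_mul_sub_sq_le {ℓ a E : ℝ} (hℓ : 0 ≤ ℓ)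
    (h : ∀ t : ℝ, t * a - ℓ / 2 * t ^ 2 * a ≤ E) : a ≤ 2 * ℓ * E := by
  rcases hℓ.eq_or_lt with rfl | hℓ
  · by_contra! hpos
    have := h ((E + 1) / a)
    rw [div_mul_cancel₀ _ (by linarith)] at this
    linarith
  · calc a = 2 * ℓ * (ℓ⁻¹ * a - ℓ / 2 * ℓ⁻¹ ^ 2 * a) := by field_simp; ring
      _ ≤ 2 * ℓ * E := by gcongr; exact h ℓ⁻¹

theorem norm_smul_sub_smul_sq (a b : ℝ) (x y : H) :
    ‖a • x - b • y‖ ^ 2 = a ^ 2 * ‖x‖ ^ 2 - 2 * (a * b) * ⟪x, y⟫ + b ^ 2 * ‖y‖ ^ 2 := by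
  rw [norm_sub_sq_real, real_inner_smul_left, real_inner_smul_right, norm_smul, norm_smul,
    Real.norm_eq_abs, Real.norm_eq_abs, mul_pow, mul_pow, sq_abs, sq_abs]
  ring

theorem norm_sub_smul_sq (c : ℝ) (x y : H) :
    ‖x - c • y‖ ^ 2 = ‖x‖ ^ 2 - 2 * c * ⟪x, y⟫ + c ^ 2 * ‖y‖ ^ 2 := by
  simpa using norm_smul_sub_smul_sq 1 c x y

namespace IsSubgradient

variable {μ L : ℝ} {f : H → ℝ}

theorem le_add_inner_add_norm_sq {y g : H} (hg : IsSubgradient μ f y g)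
    (hf : HasUpperCurvature L f) (z : H) :
    f z ≤ f y + ⟪g, z - y⟫ + L / 2 * ‖z - y‖ ^ 2 := by
  have hsq : ∀ w : H, ‖w‖ ^ 2 = ‖y‖ ^ 2 + 2 * ⟪y, w - y⟫ + ‖w - y‖ ^ 2 := fun w => by
    rw [← norm_add_sq_real, add_sub_cancel]
  have hmaj : ∀ w, L / 2 * ‖w‖ ^ 2 - f w ≤
      L / 2 * ‖y‖ ^ 2 - f y + ⟪L • y - g, w - y⟫ + (L - μ) / 2 * ‖w - y‖ ^ 2 := fun w => by
    have := hg w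
    rw [inner_sub_left, real_inner_smul_left, hsq w]
    linarith
  have := ConvexOn.add_inner_sub_le_of_forall_le hf hmaj z
  rw [inner_sub_left, real_inner_smul_left, hsq z] at this
  linarith

theorem le_of_hasUpperCurvature_s12 [Nontrivial H] {x g : H} (hg : IsSubgradient μ f x g)
    (hf : HasUpperCurvature L f) : μ ≤ L := by
  obtain ⟨v, hv⟩ := exists_ne (0 : H)
  have hlo := hg (x + v)
  have hup := hg.le_add_inner_add_norm_sq hf (x + v)
  rw [add_sub_cancel_left] at hlo hup
  have hv2 : 0 < ‖v‖ ^ 2 := by positivity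
  nlinarith

theorem norm_sub_sub_smul_sq_le_s12 {x y gx gy : H} (hx : IsSubgradient μ f x gx)
    (hy : IsSubgradient μ f y gy) (hf : HasUpperCurvature L f) (hμL : μ ≤ L) :
    ‖gx - gy - μ • (x - y)‖ ^ 2 ≤ 2 * (L - μ) * (f x - f y - ⟪gy, x - y⟫ - μ / 2 * ‖x - y‖ ^ 2) := by
  set v := gx - gy - μ • (x - y)
  refine le_two_mul_of_forall_mul_sub_sq_le (sub_nonneg.2 hμL) fun t => ?_
  -- compare the two bounds on `f` at the point `x - t • v`
  have hlo := hy (x - t • v)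
  have hup := hx.le_add_inner_add_norm_sq hf (x - t • v)
  have hv : ⟪v, v⟫ = ⟪gx, v⟫ - ⟪gy, v⟫ - μ * ⟪x - y, v⟫ := by
    simp only [v, inner_sub_left, real_inner_smul_left]
  rw [show x - t • v - y = x - y - t • v by abel, norm_sub_smul_sq,
    inner_sub_right, inner_smul_right] at hlo
  rw [show x - t • v - x = (-t) • v by module, inner_smul_right, norm_smul, Real.norm_eq_abs,
    mul_pow, sq_abs] at hup
  rw [real_inner_self_eq_norm_sq] at hv
  linear_combination hup + hlo + t * hv

theorem two_mul_sub_le_of_nonpos {a b u v : H} (hu : IsSubgradient μ f a u)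
    (hv : IsSubgradient μ f b v) (hf : HasUpperCurvature L f) (hμ : μ ≤ 0) (hL : 0 < L) :
    2 * (L + μ) * (f a - f b) ≤ 2 * (L + μ) * ⟪u, a - b⟫ - L * μ * ‖a - b‖ ^ 2 - ‖u - v‖ ^ 2 := by
  have hμL : μ ≤ L := by linarith
  have hab := hu.norm_sub_sub_smul_sq_le_s12 hv hf hμL
  have hba := hv.norm_sub_sub_smul_sq_le_s12 hu hf hμL
  rw [show v - u - μ • (b - a) = -(u - v - μ • (a - b)) by module, norm_neg, ← neg_sub a b,
    inner_neg_right, norm_neg] at hba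
  have hB := norm_sub_smul_sq μ (u - v) (a - b)
  rw [inner_sub_left] at hB
  have h1 := mul_le_mul_of_nonneg_left hba hL.le
  have h2 := mul_le_mul_of_nonneg_left hab (neg_nonneg.2 hμ)
  refine le_of_mul_le_mul_left ?_ (show 0 < L - μ by linarith)
  linear_combination h1 + h2 - (L - μ) * hB

end IsSubgradient

theorem mul_mul_norm_sq_le_of_norm_sub_smul_sq_le {α β γ c E : ℝ} {w d : H} (hα : 0 ≤ α)
    (hβ : 0 ≤ β) (hγ : 0 ≤ γ) (hE : 0 ≤ E) (h : ‖w - c • d‖ ^ 2 ≤ 2 * γ * E) :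
    α * β * ‖w‖ ^ 2 ≤ (α * γ + β * c ^ 2) * (α * ‖d‖ ^ 2 + 2 * β * E) := by
  rcases hγ.eq_or_lt with rfl | hγ
  · have hw : w = c • d := by
      rw [← sub_eq_zero, ← norm_eq_zero]
      nlinarith [norm_nonneg (w - c • d)]
    rw [hw, norm_smul, Real.norm_eq_abs, mul_pow, sq_abs]
    nlinarith [mul_nonneg (mul_nonneg (sq_nonneg β) (sq_nonneg c)) hE]
  · have hsq := sq_nonneg ‖(β * c) • w - (α * γ + β * c ^ 2) • d‖
    have hfac : 0 ≤ β * (α * γ + β * c ^ 2) := by positivity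
    have hmul := mul_le_mul_of_nonneg_left h hfac
    rw [norm_smul_sub_smul_sq] at hsq
    rw [norm_sub_smul_sq] at hmul
    refine le_of_mul_le_mul_left ?_ hγ
    linear_combination hsq + hmul

theorem dca_step_descent {μ1 μ2 L1 L2 : ℝ} {f1 f2 : H → ℝ} (hμ2 : μ2 < 0) (hμ : -μ2 < μ1)
    (hμ1L2 : μ1 < L2) (hμ1L1 : μ1 ≤ L1) (hS : 1 / μ1 + 1 / μ2 + 1 / L2 ≤ 0)
    (hf1 : HasUpperCurvature L1 f1) (hf2 : HasUpperCurvature L2 f2) {a b u1 u2 v2 : H}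
    (hu1 : IsSubgradient μ1 f1 a u1) (hu2 : IsSubgradient μ1 f1 b u2)
    (hu2' : IsSubgradient μ2 f2 a u2) (hv2 : IsSubgradient μ2 f2 b v2) :
    (1 / L1) * (1 / μ1 + 1 / μ2 + 1 / L2) / (1 / μ1 + 1 / μ2 + 1 / L2 - 1 / L1) / 2 * ‖u1 - u2‖ ^ 2
        + 1 / (L2 + μ2) / 2 * ‖u2 - v2‖ ^ 2 ≤ (f1 a - f2 a) - (f1 b - f2 b) := by
  have hμ1 : 0 < μ1 := by linarith
  have hL2 : 0 < L2 := by linarith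
  have hs : 0 < L2 + μ2 := by linarith
  have hL1 : 0 < L1 := by linarith
  have hμ2ne : μ2 ≠ 0 := hμ2.ne
  set T := μ1 * μ2 + μ1 * L2 + μ2 * L2 with hT_def
  have hT : 0 ≤ T := by
    have hST : (1 / μ1 + 1 / μ2 + 1 / L2) * (μ1 * μ2 * L2) = T := by field_simp; ring
    rw [← hST]
    exact mul_nonneg_of_nonpos_of_nonpos hS (by nlinarith [mul_pos hμ1 hL2])
  -- `K = L1 T - μ1 μ2 L2`, written in the shape `α γ + β c²` of the minimisation over `a - b`
  set K := T * (L1 - μ1) + (L2 + μ2) * μ1 ^ 2 with hK_def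
  have hK : 0 < K := by have := sub_nonneg.2 hμ1L1; positivity
  have hq : (1 / L1) * (1 / μ1 + 1 / μ2 + 1 / L2) / (1 / μ1 + 1 / μ2 + 1 / L2 - 1 / L1) = T / K := by
    have hD : 1 / μ1 + 1 / μ2 + 1 / L2 - 1 / L1 = K / (μ1 * μ2 * L2 * L1) := by
      field_simp
      ring
    rw [hD]
    field_simp
    ring
  have h1 := mul_mul_norm_sq_le_of_norm_sub_smul_sq_le hT hs.le (sub_nonneg.2 hμ1L1)
    (by linarith [hu2 a]) (hu1.norm_sub_sub_smul_sq_le_s12 hu2 hf1 hμ1L1)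
  have h2 := hu2'.two_mul_sub_le_of_nonpos hv2 hf2 hμ2.le hL2
  rw [hq]
  have hmin := div_nonneg (sub_nonneg.2 h1) (by positivity : 0 ≤ 2 * K * (L2 + μ2))
  have hconc := div_nonneg (sub_nonneg.2 h2) (by positivity : 0 ≤ 2 * (L2 + μ2))
  rw [← sub_nonneg]
  calc 0 ≤ _ := add_nonneg hmin hconc
    _ = _ := by
      rw [← hK_def]
      field_simp
      rw [hT_def]
      ring

theorem mul_inf'_le_of_forall_le_sub {N : ℕ} {a b : ℝ} (ha : 0 ≤ a) (hb : 0 ≤ b)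
    {r φ : ℕ → ℝ} (h : ∀ k < N, a * r k + b * r (k + 1) ≤ φ k - φ (k + 1)) :
    (a + b) * N * (Finset.range (N + 1)).inf' Finset.nonempty_range_add_one r ≤ φ 0 - φ N := by
  set m := (Finset.range (N + 1)).inf' Finset.nonempty_range_add_one r
  have hm : ∀ k ≤ N, m ≤ r k := fun k hk =>
    Finset.inf'_le _ (Finset.mem_range.2 (Nat.lt_succ_of_le hk))
  calc (a + b) * N * m = ∑ _k ∈ Finset.range N, (a * m + b * m) := by
        rw [Finset.sum_const, Finset.card_range, nsmul_eq_mul]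
        ring
    _ ≤ ∑ k ∈ Finset.range N, (φ k - φ (k + 1)) := by
        refine Finset.sum_le_sum fun k hk => le_trans ?_ (h k (Finset.mem_range.1 hk))
        have hk := Finset.mem_range.1 hk
        gcongr
        exacts [hm k hk.le, hm (k + 1) hk]
    _ = φ 0 - φ N := Finset.sum_range_sub' φ N

theorem dca_rate_p3_general
    (mu1 mu2 L1 L2 : ℝ)
    (h1 : -mu2 < mu1) (h2 : 0 < -mu2) (h3 : mu1 < L2)
    (h6 : 1 / mu1 + 1 / mu2 + 1 / L2 ≤ 0)
    (f1 f2 : H → ℝ)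
    (h1up : HasUpperCurvature L1 f1)
    (h2up : HasUpperCurvature L2 f2)
    (N : ℕ) (hN : 1 ≤ N) (x g1 g2 : ℕ → H)
    (hg1 : ∀ k ≤ N, IsSubgradient mu1 f1 (x k) (g1 k))
    (hg2 : ∀ k ≤ N, IsSubgradient mu2 f2 (x k) (g2 k))
    (hdca : ∀ k < N, g1 (k + 1) = g2 k) :
    ((1 : ℝ) / 2) * ((Finset.range (N + 1)).inf' (Finset.nonempty_range_iff.mpr (Nat.succ_ne_zero N))
        fun k => ‖g1 k - g2 k‖ ^ 2) ≤
      ((f1 (x 0) - f2 (x 0)) - (f1 (x N) - f2 (x N))) /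
        (((1 / L1) * (1 / mu1 + 1 / mu2 + 1 / L2) /
            (1 / mu1 + 1 / mu2 + 1 / L2 - 1 / L1) + 1 / (L2 + mu2)) * N) := by
  rcases subsingleton_or_nontrivial H with hH | hH
  · simp [Subsingleton.elim (x N) (x 0), Subsingleton.elim (g1 _ - g2 _) 0]
  have hmu1L1 : mu1 ≤ L1 := (hg1 0 N.zero_le).le_of_hasUpperCurvature_s12 h1up
  set q1 := (1 / L1) * (1 / mu1 + 1 / mu2 + 1 / L2) / (1 / mu1 + 1 / mu2 + 1 / L2 - 1 / L1)
  set q2 := 1 / (L2 + mu2)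
  have hL1 : 0 < 1 / L1 := one_div_pos.2 (by linarith)
  have hq1 : 0 ≤ q1 :=
    div_nonneg_of_nonpos (mul_nonpos_of_nonneg_of_nonpos hL1.le h6) (by linarith)
  have hq2 : 0 < q2 := one_div_pos.2 (by linarith)
  have hdesc := mul_inf'_le_of_forall_le_sub (div_nonneg hq1 zero_le_two)
    (div_nonneg hq2.le zero_le_two) (r := fun k => ‖g1 k - g2 k‖ ^ 2)
    (φ := fun k => f1 (x k) - f2 (x k)) fun k hk => by
      have hu2 := hg1 (k + 1) hk
      rw [hdca k hk] at hu2 ⊢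
      exact dca_step_descent (by linarith) h1 h3 hmu1L1 h6 h1up h2up (hg1 k hk.le) hu2
        (hg2 k hk.le) (hg2 (k + 1) hk)
  rw [le_div_iff₀ (by positivity)]
  linarith

/-- DCA sublinear rate, regime p3. -/
theorem dca_rate_p3
    (mu1 mu2 L1 L2 : ℝ)
    (h1 : -mu2 < mu1) (h2 : 0 < -mu2) (h3 : mu1 < L2) (h4 : mu2 < L1)
    (h5 : (1 / L1) * (2 + L2 / mu2) ≤ 1 / mu1 + 1 / mu2 + 1 / L2)
    (h6 : 1 / mu1 + 1 / mu2 + 1 / L2 ≤ 0)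
    (f1 f2 : H → ℝ)
    (h1lo : HasLowerCurvature mu1 f1) (h1up : HasUpperCurvature L1 f1)
    (h2lo : HasLowerCurvature mu2 f2) (h2up : HasUpperCurvature L2 f2)
    (N : ℕ) (hN : 1 ≤ N) (x g1 g2 : ℕ → H)
    (hg1 : ∀ k ≤ N, IsSubgradient mu1 f1 (x k) (g1 k))
    (hg2 : ∀ k ≤ N, IsSubgradient mu2 f2 (x k) (g2 k))
    (hdca : ∀ k < N, g1 (k + 1) = g2 k) :
    ((1 : ℝ) / 2) * ((Finset.range (N + 1)).inf' (Finset.nonempty_range_iff.mpr (Nat.succ_ne_zero N))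
        fun k => ‖g1 k - g2 k‖ ^ 2) ≤
      ((f1 (x 0) - f2 (x 0)) - (f1 (x N) - f2 (x N))) /
        (((1 / L1) * (1 / mu1 + 1 / mu2 + 1 / L2) /
            (1 / mu1 + 1 / mu2 + 1 / L2 - 1 / L1) + 1 / (L2 + mu2)) * N) :=
  dca_rate_p3_general mu1 mu2 L1 L2 h1 h2 h3 h6 f1 f2 h1up h2up N hN x g1 g2 hg1 hg2 hdca
end

section
/- (Nonsmooth one-step decrease, case μ2 < 0.) Let f1 ∈ F_{μ1,∞} and f2 ∈ F_{μ2,∞} with μ1 > −μ2 > 0. Let F := f1 − f2 and consider a DCA step from x to x⁺ with g2 ∈ ∂f2(x), g1⁺ ∈ ∂f1(x⁺), g1⁺ = g2, and set T(x) := f1(x) − f1(x⁺) − ⟨g2, x − x⁺⟩. Then ((μ1 + μ2)/μ1)·T(x) ≤ F(x) − F(x⁺). -/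
open RealInnerProductSpace

variable {H : Type*} [NormedAddCommGroup H] [InnerProductSpace ℝ H]

/-- nonsmooth one-step decrease, case `μ₂ < 0`. -/
theorem dca_nonsmooth_step_mu2_neg
    (mu1 mu2 : ℝ) (h1 : -mu2 < mu1) (h2 : 0 < -mu2)
    (f1 f2 : H → ℝ)
    (h1lo : HasLowerCurvature mu1 f1) (h2lo : HasLowerCurvature mu2 f2)
    (x xp g : H)
    (hg2 : IsSubgradient mu2 f2 x g) (hg1p : IsSubgradient mu1 f1 xp g) :
    (mu1 + mu2) / mu1 * (f1 x - f1 xp - ⟪g, x - xp⟫) ≤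
      (f1 x - f2 x) - (f1 xp - f2 xp) := by
  have hmu1 : 0 < mu1 := lt_trans h2 h1
  have hA := hg1p x
  have hB := hg2 xp
  have hnorm : ‖xp - x‖ = ‖x - xp‖ := norm_sub_rev _ _
  have hinner : ⟪g, xp - x⟫ = -⟪g, x - xp⟫ := by
    rw [← inner_neg_right, neg_sub]
  rw [hnorm, hinner] at hB
  rw [div_mul_eq_mul_div, div_le_iff₀ hmu1]
  nlinarith [sq_nonneg (‖x - xp‖), mul_pos h2 hmu1,
    mul_le_mul_of_nonneg_left (show mu1 / 2 * ‖x - xp‖ ^ 2 ≤ f1 x - f1 xp - ⟪g, x - xp⟫ by linarith) (le_of_lt h2)]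
end

section
/- (Nonsmooth DCA convergence rate, case μ2 ≥ 0.) Let f1 ∈ F_{μ1,∞} and f2 ∈ F_{μ2,∞} with μ2 ≥ 0, and assume μ1 + μ2 > 0 or μ1 = μ2 = 0. Let F := f1 − f2 be bounded below with F* := inf F finite. Let N ≥ 1 and let x⁰, …, x^N be a DCA sequence with subgradients, and for 0 ≤ k ≤ N−1 set T(x^k) := f1(x^k) − f1(x^{k+1}) − ⟨g2^k, x^k − x^{k+1}⟩. Then min_{0 ≤ k ≤ N−1} T(x^k) + (μ2/2)·min_{0 ≤ k ≤ N−1} ‖x^k − x^{k+1}‖² ≤ (F(x⁰) − F*)/N. -/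
open RealInnerProductSpace

variable {H : Type*} [NormedAddCommGroup H] [InnerProductSpace ℝ H]

/-- nonsmooth DCA convergence rate, case `μ₂ ≥ 0`. -/
theorem dca_nonsmooth_rate_mu2_nonneg
    (mu1 mu2 : ℝ) (h1 : 0 ≤ mu2)
    (h2 : 0 < mu1 + mu2 ∨ (mu1 = 0 ∧ mu2 = 0))
    (f1 f2 : H → ℝ)
    (h1lo : HasLowerCurvature mu1 f1) (h2lo : HasLowerCurvature mu2 f2)
    (hbdd : BddBelow (Set.range fun z : H => f1 z - f2 z))
    (N : ℕ) (hN : 1 ≤ N) (x g1 g2 : ℕ → H)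
    (hg1 : ∀ k ≤ N, IsSubgradient mu1 f1 (x k) (g1 k))
    (hg2 : ∀ k ≤ N, IsSubgradient mu2 f2 (x k) (g2 k))
    (hdca : ∀ k < N, g1 (k + 1) = g2 k) :
    ((Finset.range N).inf' (Finset.nonempty_range_iff.mpr (by omega))
        fun k => f1 (x k) - f1 (x (k + 1)) - ⟪g2 k, x k - x (k + 1)⟫) +
      mu2 / 2 * ((Finset.range N).inf' (Finset.nonempty_range_iff.mpr (by omega))
        fun k => ‖x k - x (k + 1)‖ ^ 2) ≤
      ((f1 (x 0) - f2 (x 0)) - ⨅ z : H, (f1 z - f2 z)) / N := by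
  set F : H → ℝ := fun z => f1 z - f2 z with hF
  set T : ℕ → ℝ := fun k => f1 (x k) - f1 (x (k + 1)) - ⟪g2 k, x k - x (k + 1)⟫ with hT
  set D : ℕ → ℝ := fun k => ‖x k - x (k + 1)‖ ^ 2 with hD
  have hNpos : (0 : ℝ) < N := by exact_mod_cast hN
  have key : ∀ k < N, T k + mu2 / 2 * D k ≤ F (x k) - F (x (k + 1)) := by
    intro k hk
    have h := hg2 k hk.le (x (k + 1))
    have hinner : ⟪g2 k, x (k + 1) - x k⟫ = -⟪g2 k, x k - x (k + 1)⟫ := by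
      rw [← inner_neg_right, neg_sub]
    have hnorm : ‖x (k + 1) - x k‖ = ‖x k - x (k + 1)‖ := by
      rw [← neg_sub, norm_neg]
    rw [hinner, hnorm] at h
    simp only [hT, hD, hF]
    linarith
  -- lower bound each summand by LHS
  have hmain : (N : ℝ) *
      (((Finset.range N).inf' (Finset.nonempty_range_iff.mpr (by omega)) T) +
        mu2 / 2 * ((Finset.range N).inf' (Finset.nonempty_range_iff.mpr (by omega)) D)) ≤
      F (x 0) - F (x N) := by
    have hsum : ∑ k ∈ Finset.range N, (F (x k) - F (x (k + 1))) = F (x 0) - F (x N) :=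
      Finset.sum_range_sub' (fun k => F (x k)) N
    calc (N : ℝ) * (((Finset.range N).inf' _ T) + mu2 / 2 * ((Finset.range N).inf' _ D))
        = ∑ _k ∈ Finset.range N,
            (((Finset.range N).inf' (Finset.nonempty_range_iff.mpr (by omega)) T) +
              mu2 / 2 * ((Finset.range N).inf' (Finset.nonempty_range_iff.mpr (by omega)) D)) := by
          rw [Finset.sum_const, Finset.card_range, nsmul_eq_mul]
      _ ≤ ∑ k ∈ Finset.range N, (T k + mu2 / 2 * D k) := by
          apply Finset.sum_le_sum
          intro k hk
          have hk' := Finset.mem_range.mp hk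
          gcongr
          · exact Finset.inf'_le _ hk
          · exact Finset.inf'_le _ hk
      _ ≤ ∑ k ∈ Finset.range N, (F (x k) - F (x (k + 1))) := by
          apply Finset.sum_le_sum
          intro k hk
          exact key k (Finset.mem_range.mp hk)
      _ = F (x 0) - F (x N) := hsum
  have hinf : (⨅ z : H, F z) ≤ F (x N) := ciInf_le hbdd (x N)
  rw [le_div_iff₀ hNpos]
  have : (⨅ z : H, (f1 z - f2 z)) = ⨅ z : H, F z := rfl
  rw [this]
  calc _ = (N : ℝ) * (((Finset.range N).inf' _ T) + mu2 / 2 * ((Finset.range N).inf' _ D)) := by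
        ring
    _ ≤ F (x 0) - F (x N) := hmain
    _ ≤ F (x 0) - ⨅ z : H, F z := by linarith
end
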